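/- arXiv:2105.12509 — 11 statements merged into one kernel-verified Lean document; each statement's English description precedes it below -/
import Mathlib

section
/- Let H be a hiding set for a lattice-convex set X ⊆ ℤ^d, i.e., a set of points in (aff(X) ∩ ℤ^d) \ X such that for all distinct x, y ∈ H the segment conv({x,y}) intersects conv(X). Then any polyhedron P = {x : Ax ≤ b} with P ∩ ℤ^d = X has at least |H| facets; that is, any finite system of linear inequalities whose integer solution set equals X contains at least |H| inequalities. -/
/-! Every point of the hiding set `H` lies outside `X`, so it violates some inequality of the
system. A single inequality, being valid on `conv X`, cannot be violated by two distinct points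
of `H`: the open half-space it cuts off is convex, so it would contain the segment between
them, which meets `conv X`. Hence choosing a violated inequality for each point of `H` is
injective. -/

/-- Coercion of an integer point to a real point. -/
def toR {d : ℕ} (z : Fin d → ℤ) : Fin d → ℝ := fun i => (z i : ℝ)

theorem Finset.card_le_card_of_forall_exists_cut {α ι : Type*} [Fintype ι] (H : Finset α)
    (cut : ι → α → Prop) (hcover : ∀ x ∈ H, ∃ i, cut i x)
    (hsep : ∀ i, ∀ x ∈ H, ∀ y ∈ H, cut i x → cut i y → x = y) :
    H.card ≤ Fintype.card ι := by
  choose f hf using fun x : H => hcover x x.2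
  rw [← Fintype.card_coe]
  exact Fintype.card_le_of_injective f fun x y hxy =>
    Subtype.ext (hsep _ x x.2 y y.2 (hf x) (hxy ▸ hf y))

theorem not_lt_and_lt_of_convexHull_pair_inter_nonempty {E : Type*} [AddCommGroup E]
    [Module ℝ E] (f : E →ₗ[ℝ] ℝ) {c : ℝ} {S : Set E} (hS : ∀ s ∈ S, f s ≤ c) {x y : E}
    (hmeet : (convexHull ℝ {x, y} ∩ convexHull ℝ S).Nonempty) :
    ¬(c < f x ∧ c < f y) := by
  rintro ⟨hx, hy⟩
  obtain ⟨p, hpxy, hpS⟩ := hmeet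
  have hp_le : f p ≤ c :=
    convexHull_min (t := {w | f w ≤ c}) hS (convex_halfSpace_le f.isLinear c) hpS
  have hp_gt : c < f p :=
    convexHull_min (t := {w | c < f w}) (Set.insert_subset hx (Set.singleton_subset_iff.2 hy))
      (convex_halfSpace_gt f.isLinear c) hpxy
  exact hp_le.not_gt hp_gt

theorem hiding_set_lower_bound_general (d m : ℕ) (X : Set (Fin d → ℤ))
    (H : Finset (Fin d → ℤ))
    (hHX : ∀ h ∈ H, h ∉ X)
    (hHhide : ∀ x ∈ H, ∀ y ∈ H, x ≠ y →
      (convexHull ℝ {toR x, toR y} ∩ convexHull ℝ (toR '' X)).Nonempty)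
    (A : Fin m → Fin d → ℝ) (b : Fin m → ℝ)
    (hrel : ∀ z : Fin d → ℤ, (∀ i, ∑ j, A i j * (z j : ℝ) ≤ b i) ↔ z ∈ X) :
    H.card ≤ m := by
  let row : Fin m → (Fin d → ℝ) →ₗ[ℝ] ℝ := fun i => dotProductBilin ℝ ℝ (A i)
  have hvalid : ∀ i, ∀ p ∈ toR '' X, row i p ≤ b i := by
    rintro i _ ⟨z, hz, rfl⟩
    exact (hrel z).2 hz i
  have hcover : ∀ h ∈ H, ∃ i, b i < row i (toR h) := by
    intro h hh
    by_contra! hsat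
    exact hHX h hh ((hrel h).1 hsat)
  simpa using H.card_le_card_of_forall_exists_cut (fun i h => b i < row i (toR h)) hcover
    fun i x hx y hy hx_cut hy_cut => by_contra fun hne =>
      not_lt_and_lt_of_convexHull_pair_inter_nonempty (row i) (hvalid i)
        (hHhide x hx y hy hne) ⟨hx_cut, hy_cut⟩

/-- any relaxation of a lattice-convex set `X` has at least `|H|`
inequalities, for every hiding set `H` of `X`. -/
theorem hiding_set_lower_bound (d m : ℕ) (X : Set (Fin d → ℤ))
    (hX : ∀ z : Fin d → ℤ, toR z ∈ convexHull ℝ (toR '' X) ↔ z ∈ X)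
    (H : Finset (Fin d → ℤ))
    (hHaff : ∀ h ∈ H, toR h ∈ (affineSpan ℝ (toR '' X) : Set (Fin d → ℝ)))
    (hHX : ∀ h ∈ H, h ∉ X)
    (hHhide : ∀ x ∈ H, ∀ y ∈ H, x ≠ y →
      (convexHull ℝ {toR x, toR y} ∩ convexHull ℝ (toR '' X)).Nonempty)
    (A : Fin m → Fin d → ℝ) (b : Fin m → ℝ)
    (hrel : ∀ z : Fin d → ℤ, (∀ i, ∑ j, A i j * (z j : ℝ) ≤ b i) ↔ z ∈ X) :
    H.card ≤ m :=
  hiding_set_lower_bound_general d m X H hHX hHhide A b hrel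
end

section
/- Let A be a real m × n matrix with n = 2^(2^m) + 1 columns. Then there exist column indices j_1 < j_2 < j_3 such that for every row i, the triple (A_{i,j_1}, A_{i,j_2}, A_{i,j_3}) is monotonic (i.e., either A_{i,j_1} ≤ A_{i,j_2} ≤ A_{i,j_3} or A_{i,j_1} ≥ A_{i,j_2} ≥ A_{i,j_3}). -/
/-!
Erdős–Szekeres, iterated over the rows. Given more than `k ^ 2 ^ (m + 1) = (k ^ 2 ^ m) ^ 2`
columns, the first row is monotone on more than `k ^ 2 ^ m` of them, and the induction hypothesis
applies to the remaining `m` rows restricted to those columns; with `k = 2` this gives three.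

For Erdős–Szekeres, label each index by the length of the longest monotone chain ending there. If
no chain is longer than `r`, the labels lie in `[1, r]`, so by pigeonhole more than `q` indices
share a label; since a monotone step would increase the label, `f` strictly decreases along them.
-/

open Finset

section ErdosSzekeres

variable {ι α : Type*} [LinearOrder ι] [LinearOrder α]

open Classical in
noncomputable def monotoneChainsEndingAt (f : ι → α) (s : Finset ι) (i : ι) : Finset (Finset ι) :=
  {t ∈ s.powerset | i ∈ t ∧ (∀ j ∈ t, j ≤ i) ∧ MonotoneOn f (t : Set ι)}

noncomputable def longestMonotoneChainEndingAt (f : ι → α) (s : Finset ι) (i : ι) : ℕ :=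
  (monotoneChainsEndingAt f s i).sup card

variable {f : ι → α} {s t : Finset ι} {i j : ι}

theorem mem_monotoneChainsEndingAt :
    t ∈ monotoneChainsEndingAt f s i ↔ t ⊆ s ∧ i ∈ t ∧ (∀ j ∈ t, j ≤ i) ∧ MonotoneOn f t := by
  simp [monotoneChainsEndingAt]

theorem insert_mem_monotoneChainsEndingAt (ht : t ∈ monotoneChainsEndingAt f s i) (hj : j ∈ s)
    (hij : i < j) (hf : f i ≤ f j) : insert j t ∈ monotoneChainsEndingAt f s j := by
  obtain ⟨hts, hit, hle, hmono⟩ := mem_monotoneChainsEndingAt.1 ht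
  refine mem_monotoneChainsEndingAt.2 ⟨insert_subset hj hts, mem_insert_self j t, ?_, ?_⟩
  · exact forall_mem_insert _ _ _ |>.2 ⟨le_rfl, fun k hk => (hle k hk).trans hij.le⟩
  · rw [coe_insert, Set.monotoneOn_insert_iff]
    exact ⟨fun k hk _ => (hmono hk hit (hle k hk)).trans hf,
      fun k hk hjk => absurd ((hle k hk).trans_lt hij) hjk.not_gt, hmono⟩

theorem one_le_longestMonotoneChainEndingAt (hi : i ∈ s) :
    1 ≤ longestMonotoneChainEndingAt f s i :=
  le_sup_of_le (b := {i}) (by simp [mem_monotoneChainsEndingAt, hi]) (card_singleton i).ge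

theorem longestMonotoneChainEndingAt_le {r : ℕ} (hr : ∀ t ⊆ s, MonotoneOn f t → #t ≤ r) :
    longestMonotoneChainEndingAt f s i ≤ r :=
  Finset.sup_le fun t ht =>
    have ht := mem_monotoneChainsEndingAt.1 ht
    hr t ht.1 ht.2.2.2

theorem longestMonotoneChainEndingAt_lt (hj : j ∈ s) (hij : i < j) (hf : f i ≤ f j) :
    longestMonotoneChainEndingAt f s i < longestMonotoneChainEndingAt f s j := by
  refine (Finset.sup_lt_iff (one_le_longestMonotoneChainEndingAt hj)).2 fun t ht => ?_
  have hjt : j ∉ t := fun hjt => ((mem_monotoneChainsEndingAt.1 ht).2.2.1 j hjt).not_gt hij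
  calc #t < #(insert j t) := by rw [card_insert_of_notMem hjt]; exact Nat.lt_succ_self _
    _ ≤ _ := le_sup (insert_mem_monotoneChainsEndingAt ht hj hij hf)

theorem exists_monotoneOn_or_strictAntiOn_of_mul_lt_card (f : ι → α) {s : Finset ι} {r q : ℕ}
    (h : r * q < #s) :
    (∃ t ⊆ s, r < #t ∧ MonotoneOn f t) ∨ ∃ t ⊆ s, q < #t ∧ StrictAntiOn f t := by
  refine or_iff_not_imp_left.2 fun hr => ?_
  have hmaps : ∀ i ∈ s, longestMonotoneChainEndingAt f s i ∈ Icc 1 r := fun i hi =>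
    mem_Icc.2 ⟨one_le_longestMonotoneChainEndingAt hi, longestMonotoneChainEndingAt_le
      fun t hts hmono => not_lt.1 fun hrt => hr ⟨t, hts, hrt, hmono⟩⟩
  obtain ⟨ℓ, -, hℓ⟩ := exists_lt_card_fiber_of_mul_lt_card_of_maps_to hmaps (by simpa using h)
  refine ⟨_, filter_subset _ _, hℓ, fun i hi j hj hij => ?_⟩
  rw [coe_filter] at hi hj
  by_contra! hf
  exact (longestMonotoneChainEndingAt_lt hj.1 hij hf).ne (hi.2.trans hj.2.symm)

end ErdosSzekeres

section DeBruijn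

variable {ι α : Type*} [LinearOrder ι] [LinearOrder α]

theorem exists_monotoneOn_or_antitoneOn_of_mul_lt_card (f : ι → α) {s : Finset ι} {k : ℕ}
    (h : k * k < #s) : ∃ t ⊆ s, k < #t ∧ (MonotoneOn f t ∨ AntitoneOn f t) := by
  rcases exists_monotoneOn_or_strictAntiOn_of_mul_lt_card f h with
    ⟨t, hts, hk, hmono⟩ | ⟨t, hts, hk, hanti⟩
  · exact ⟨t, hts, hk, Or.inl hmono⟩
  · exact ⟨t, hts, hk, Or.inr hanti.antitoneOn⟩

theorem exists_forall_monotoneOn_or_antitoneOn_of_pow_lt_card {m : ℕ} (f : Fin m → ι → α)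
    {s : Finset ι} {k : ℕ} (h : k ^ 2 ^ m < #s) :
    ∃ t ⊆ s, k < #t ∧ ∀ i, MonotoneOn (f i) t ∨ AntitoneOn (f i) t := by
  induction m generalizing s with
  | zero => exact ⟨s, subset_rfl, by simpa using h, finZeroElim⟩
  | succ m ih =>
    have hsq : k ^ 2 ^ m * k ^ 2 ^ m < #s := by rwa [← pow_add, ← two_mul, ← pow_succ']
    obtain ⟨t, hts, ht, hf₀⟩ := exists_monotoneOn_or_antitoneOn_of_mul_lt_card (f 0) hsq
    obtain ⟨u, hut, hu, hfu⟩ := ih (fun i => f i.succ) ht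
    refine ⟨u, hut.trans hts, hu, Fin.cases ?_ hfu⟩
    exact hf₀.imp (·.mono (coe_subset.2 hut)) (·.mono (coe_subset.2 hut))

end DeBruijn

/-- De Bruijn's lemma. A real `m × (2^(2^m)+1)` matrix has three
columns `j₁ < j₂ < j₃` such that every row is monotonic on them. -/
theorem de_bruijn_monotone_columns (m : ℕ) (A : Fin m → Fin (2 ^ 2 ^ m + 1) → ℝ) :
    ∃ j₁ j₂ j₃ : Fin (2 ^ 2 ^ m + 1), j₁ < j₂ ∧ j₂ < j₃ ∧
      ∀ i : Fin m, (A i j₁ ≤ A i j₂ ∧ A i j₂ ≤ A i j₃) ∨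
        (A i j₂ ≤ A i j₁ ∧ A i j₃ ≤ A i j₂) := by
  obtain ⟨t, -, ht, hA⟩ :=
    exists_forall_monotoneOn_or_antitoneOn_of_pow_lt_card A (s := univ) (k := 2) (by simp)
  let j := t.orderEmbOfFin rfl
  have hj : ∀ a, j a ∈ (t : Set _) := t.orderEmbOfFin_mem rfl
  have h₀₁ : j ⟨0, by omega⟩ < j ⟨1, by omega⟩ := j.strictMono (by simp)
  have h₁₂ : j ⟨1, by omega⟩ < j ⟨2, by omega⟩ := j.strictMono (by simp)
  refine ⟨_, _, _, h₀₁, h₁₂, fun i => ?_⟩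
  rcases hA i with hmono | hanti
  · exact Or.inl ⟨hmono (hj _) (hj _) h₀₁.le, hmono (hj _) (hj _) h₁₂.le⟩
  · exact Or.inr ⟨hanti (hj _) (hj _) h₀₁.le, hanti (hj _) (hj _) h₁₂.le⟩
end

section
/- Let d ≥ 4 and let Y = { e_j − e_k + e_ℓ : 1 ≤ j < k < ℓ ≤ d } ⊆ ℤ^d. Suppose A ∈ ℝ^{m×d} is a matrix with nonnegative entries such that A y ≥ 0 fails for every y ∈ Y (i.e., for each y ∈ Y there is a row i with (Ay)_i < 0). Then m ≥ log₂ log₂ d. -/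
/-- Auxiliary: the mulVec value at the special vectors. -/
lemma mulVec_triple_eval {d m : ℕ} (A : Fin m → Fin d → ℝ) (j k l : Fin d) (i : Fin m) :
    Matrix.mulVec (Matrix.of A)
      (Pi.single j 1 - Pi.single k 1 + Pi.single l 1) i
      = A i j - A i k + A i l := by
  have h1 : ∀ (x : Fin d), Matrix.mulVec (Matrix.of A) (Pi.single x (1:ℝ)) i = A i x := by
    intro x
    simp [Matrix.mulVec_single]
  rw [Matrix.mulVec_add, Matrix.mulVec_sub]
  simp [h1]

/-- if a nonnegative real `m × d` matrix cuts off every point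
`e_j − e_k + e_ℓ` with `j < k < ℓ` (some coordinate of the image is negative),
then `m ≥ log₂ log₂ d`. -/
theorem nonneg_matrix_cutting_lower_bound (d m : ℕ) (hd : 4 ≤ d)
    (A : Fin m → Fin d → ℝ) (hnonneg : ∀ i j, 0 ≤ A i j)
    (hcut : ∀ j k l : Fin d, j < k → k < l →
      ∃ i : Fin m,
        Matrix.mulVec (Matrix.of A)
          (Pi.single j 1 - Pi.single k 1 + Pi.single l 1) i < 0) :
    Real.logb 2 (Real.logb 2 d) ≤ (m : ℝ) := by
  -- color of a pair
  set c : Fin d → Fin d → (Fin m → Bool) := fun j k i => decide (A i j ≤ A i k) with hc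
  -- key: no j < k < l with c j k = c k l
  have key : ∀ j k l : Fin d, j < k → k < l → c j k ≠ c k l := by
    intro j k l hjk hkl heq
    obtain ⟨i, hi⟩ := hcut j k l hjk hkl
    rw [mulVec_triple_eval] at hi
    have h1 : A i j < A i k := by nlinarith [hnonneg i l]
    have h2 : ¬ (A i k ≤ A i l) := by nlinarith [hnonneg i j]
    have := congrFun heq i
    simp only [hc] at this
    rw [decide_eq_decide] at this
    exact h2 (this.mp h1.le)
  -- the set map
  set S : Fin d → Finset (Fin m → Bool) :=
    fun k => Finset.image (fun j => c j k) (Finset.univ.filter (· < k)) with hS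
  have Sinj : Function.Injective S := by
    intro j k hjk
    by_contra hne
    rcases lt_or_gt_of_ne hne with h | h
    · -- c j k ∈ S k = S j, so ∃ i < j with c i j = c j k; contradiction
      have hmem : c j k ∈ S j := by
        rw [hjk]
        simp only [hS, Finset.mem_image, Finset.mem_filter]
        exact ⟨j, ⟨Finset.mem_univ j, h⟩, rfl⟩
      simp only [hS, Finset.mem_image, Finset.mem_filter] at hmem
      obtain ⟨i, ⟨_, hij⟩, hci⟩ := hmem
      exact key i j k hij h hci
    · have hmem : c k j ∈ S k := by
        rw [← hjk]
        simp only [hS, Finset.mem_image, Finset.mem_filter]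
        exact ⟨k, ⟨Finset.mem_univ k, h⟩, rfl⟩
      simp only [hS, Finset.mem_image, Finset.mem_filter] at hmem
      obtain ⟨i, ⟨_, hik⟩, hci⟩ := hmem
      exact key i k j hik h hci
  have hcard : d ≤ 2 ^ (2 ^ m) := by
    have := Fintype.card_le_of_injective S Sinj
    simpa using this
  -- now the log computation
  have hlogd : Real.logb 2 d ≤ ((2:ℕ) ^ m : ℝ) := by
    have hle : (d:ℝ) ≤ ((2:ℝ) ^ ((2:ℕ) ^ m : ℕ)) := by exact_mod_cast hcard
    calc Real.logb 2 d ≤ Real.logb 2 ((2:ℝ) ^ ((2:ℕ) ^ m : ℕ)) :=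
          Real.logb_le_logb_of_le (by norm_num) (by positivity) hle
      _ = ((2:ℕ) ^ m : ℝ) := by
          rw [Real.logb_pow, Real.logb_self_eq_one (by norm_num)]
          push_cast; ring
  have hlogd_pos : 0 < Real.logb 2 d := by
    apply Real.logb_pos (by norm_num)
    have : (4:ℝ) ≤ d := by exact_mod_cast hd
    linarith
  calc Real.logb 2 (Real.logb 2 d) ≤ Real.logb 2 ((2:ℝ) ^ m) := by
        apply Real.logb_le_logb_of_le (by norm_num) hlogd_pos
        calc Real.logb 2 d ≤ ((2:ℕ) ^ m : ℝ) := hlogd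
          _ = (2:ℝ) ^ m := by push_cast; ring
    _ = (m:ℝ) := by
        rw [Real.logb_pow, Real.logb_self_eq_one (by norm_num), mul_one]
end

section
/- For b a positive integer and ℓ ≥ 0, let X_b = {0,1}^ℓ × {0,1,...,b} ⊆ ℤ^{ℓ+1}. The simplex P = { x ∈ ℝ^{ℓ+1} : x_k ≤ 1 + Σ_{i=k+1}^{ℓ+1} (b+1)^{-i} x_i for k ∈ {1,...,ℓ}, x_{ℓ+1} ≤ b, and x_1 + Σ_{i=2}^{ℓ+1} (b+1)^{-i} x_i ≥ 0 } satisfies P ∩ ℤ^{ℓ+1} = X_b. In particular, X_b admits a relaxation with ℓ + 2 facets. -/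
/-!
Put `β = b + 1` and `T k = ∑_{k < i ≤ ℓ} z i / β ^ (i + 1)` (coordinates indexed from `0`).
Downward from `T ℓ = 0`, one gets `T k < β ^ (-(k + 1))`: given `z (k + 1) ≤ β - 1`,
`T k = z (k + 1) / β ^ (k + 2) + T (k + 1) < (β - 1 + 1) / β ^ (k + 2)`, and the bound
`z (k + 1) ≤ β - 1` comes from `z ℓ ≤ b`, resp. from the facet `z (k + 1) ≤ 1 + T (k + 1)`,
which makes the integer `z (k + 1)` less than `2`. Upward from `0 ≤ z 0 + T 0`, one keeps
`0 ≤ T k` (when `z k = 1` this is the `k`-th facet), and since `T (k + 1) < β ^ (-(k + 2))`,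
the integer `z (k + 1)` in `T k = z (k + 1) / β ^ (k + 2) + T (k + 1)` cannot be negative.
-/

open Finset

noncomputable def tailSum (β : ℝ) (ℓ : ℕ) (x : ℕ → ℤ) (k : ℕ) : ℝ :=
  ∑ i ∈ Ioc k ℓ, (x i : ℝ) / β ^ (i + 1)

theorem Int.le_one_of_le_one_add {n : ℤ} {t : ℝ} (h : (n : ℝ) ≤ 1 + t) (ht : t < 1) : n ≤ 1 := by
  have : (n : ℝ) < 2 := by linarith
  have : n < 2 := by exact_mod_cast this
  omega

theorem Int.nonneg_of_div_add_nonneg {n : ℤ} {c t : ℝ} (hc : 0 < c) (h : 0 ≤ n / c + t)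
    (ht : t < c⁻¹) : 0 ≤ n := by
  by_contra! hn
  have : (n : ℝ) ≤ -1 := by exact_mod_cast Int.le_sub_one_of_lt hn
  have : (n : ℝ) / c ≤ -1 / c := by gcongr
  rw [neg_div, one_div] at this
  linarith

theorem Int.nonneg_of_add_nonneg {n : ℤ} {t : ℝ} (h : 0 ≤ n + t) (ht : t < 1) : 0 ≤ n :=
  Int.nonneg_of_div_add_nonneg one_pos (by rwa [div_one]) (by rwa [inv_one])

theorem Fin.forall_val_lt_iff {ℓ : ℕ} {P : ℕ → Prop} :
    (∀ k : Fin (ℓ + 1), k.val < ℓ → P k) ↔ ∀ k < ℓ, P k :=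
  ⟨fun h k hk => h ⟨k, by omega⟩ hk, fun h k hk => h k hk⟩

section tailSum

variable {β : ℝ} {ℓ : ℕ} {x : ℕ → ℤ}

theorem tailSum_self : tailSum β ℓ x ℓ = 0 := by
  simp [tailSum]

theorem tailSum_eq_add_tailSum_succ {k : ℕ} (hk : k < ℓ) :
    tailSum β ℓ x k = x (k + 1) / β ^ (k + 2) + tailSum β ℓ x (k + 1) := by
  rw [tailSum, ← Icc_add_one_left_eq_Ioc, Icc_eq_cons_Ioc hk, sum_cons]
  rfl

theorem tailSum_nonneg (hβ : 0 ≤ β) {k : ℕ} (hx : ∀ i ≤ ℓ, 0 ≤ x i) : 0 ≤ tailSum β ℓ x k :=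
  sum_nonneg fun i hi => div_nonneg (Int.cast_nonneg (hx i (mem_Ioc.1 hi).2)) (by positivity)

theorem sum_fin_ite_lt_eq_tailSum (k : ℕ) :
    ∑ i : Fin (ℓ + 1), (if k < i.val then (x i : ℝ) / β ^ (i.val + 1) else 0) = tailSum β ℓ x k := by
  rw [Fin.sum_univ_eq_sum_range (fun i => if k < i then (x i : ℝ) / β ^ (i + 1) else 0),
    ← sum_filter, tailSum]
  congr 1
  ext i
  simp only [mem_filter, mem_range, mem_Ioc]
  omega

theorem tailSum_lt_inv_pow (hβ : 2 ≤ β) (hA : ∀ k < ℓ, (x k : ℝ) ≤ 1 + tailSum β ℓ x k)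
    (hB : (x ℓ : ℝ) ≤ β - 1) {k : ℕ} (hk : k ≤ ℓ) : tailSum β ℓ x k < (β ^ (k + 1))⁻¹ := by
  induction hk using Nat.decreasingInduction with
  | self => rw [tailSum_self]; positivity
  | of_succ k hk ih =>
    have hx : (x (k + 1) : ℝ) ≤ β - 1 := by
      rcases (Nat.succ_le_of_lt hk).lt_or_eq with h | h
      · have := Int.le_one_of_le_one_add (hA (k + 1) h)
          (ih.trans_le (inv_le_one_of_one_le₀ (one_le_pow₀ (by linarith))))
        have : (x (k + 1) : ℝ) ≤ 1 := by exact_mod_cast this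
        linarith
      · subst h; exact hB
    calc tailSum β ℓ x k = x (k + 1) / β ^ (k + 2) + tailSum β ℓ x (k + 1) :=
          tailSum_eq_add_tailSum_succ hk
      _ < (β - 1) / β ^ (k + 2) + (β ^ (k + 2))⁻¹ := add_lt_add_of_le_of_lt (by gcongr) ih
      _ = (β ^ (k + 1))⁻¹ := by field_simp; ring

theorem tailSum_lt_one (hβ : 2 ≤ β) (hA : ∀ k < ℓ, (x k : ℝ) ≤ 1 + tailSum β ℓ x k)
    (hB : (x ℓ : ℝ) ≤ β - 1) {k : ℕ} (hk : k ≤ ℓ) : tailSum β ℓ x k < 1 :=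
  (tailSum_lt_inv_pow hβ hA hB hk).trans_le (inv_le_one_of_one_le₀ (one_le_pow₀ (by linarith)))

theorem le_one_of_facets (hβ : 2 ≤ β) (hA : ∀ k < ℓ, (x k : ℝ) ≤ 1 + tailSum β ℓ x k)
    (hB : (x ℓ : ℝ) ≤ β - 1) {k : ℕ} (hk : k < ℓ) : x k ≤ 1 :=
  Int.le_one_of_le_one_add (hA k hk) (tailSum_lt_one hβ hA hB hk.le)

theorem add_tailSum_nonneg_of_facets (hβ : 2 ≤ β)
    (hA : ∀ k < ℓ, (x k : ℝ) ≤ 1 + tailSum β ℓ x k) (hB : (x ℓ : ℝ) ≤ β - 1)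
    (hC : 0 ≤ (x 0 : ℝ) + tailSum β ℓ x 0) : ∀ k ≤ ℓ, 0 ≤ (x k : ℝ) + tailSum β ℓ x k
  | 0, _ => hC
  | k + 1, hk => by
    have ih := add_tailSum_nonneg_of_facets hβ hA hB hC k (by omega)
    have hk0 : 0 ≤ x k := Int.nonneg_of_add_nonneg ih (tailSum_lt_one hβ hA hB (by omega))
    have hk1 : x k ≤ 1 := le_one_of_facets hβ hA hB (by omega)
    have hT : 0 ≤ tailSum β ℓ x k := by
      obtain h | h : x k = 0 ∨ x k = 1 := by omega
      · simpa [h] using ih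
      · simpa [h] using hA k (by omega)
    rw [tailSum_eq_add_tailSum_succ (by omega)] at hT
    have hsucc0 : 0 ≤ x (k + 1) :=
      Int.nonneg_of_div_add_nonneg (by positivity) hT (tailSum_lt_inv_pow hβ hA hB hk)
    have : (x (k + 1) : ℝ) / β ^ (k + 2) ≤ x (k + 1) :=
      div_le_self (by exact_mod_cast hsucc0) (one_le_pow₀ (by linarith))
    linarith

end tailSum

theorem facet_inequalities_iff_box (ℓ : ℕ) (b : ℤ) (hb : 0 < b) (x : ℕ → ℤ) :
    ((∀ k < ℓ, (x k : ℝ) ≤ 1 + tailSum (b + 1) ℓ x k) ∧ (x ℓ : ℝ) ≤ b ∧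
      0 ≤ (x 0 : ℝ) + tailSum (b + 1) ℓ x 0) ↔
    ((∀ i < ℓ, x i = 0 ∨ x i = 1) ∧ 0 ≤ x ℓ ∧ x ℓ ≤ b) := by
  have hβ : (2 : ℝ) ≤ b + 1 := by
    have : (1 : ℝ) ≤ b := by exact_mod_cast hb
    linarith
  constructor
  · rintro ⟨hA, hxb, hC⟩
    have hB : (x ℓ : ℝ) ≤ b + 1 - 1 := by simpa using hxb
    have hx0 : ∀ k ≤ ℓ, 0 ≤ x k := fun k hk =>
      Int.nonneg_of_add_nonneg (add_tailSum_nonneg_of_facets hβ hA hB hC k hk)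
        (tailSum_lt_one hβ hA hB hk)
    refine ⟨fun i hi => ?_, hx0 ℓ le_rfl, by exact_mod_cast hxb⟩
    have := le_one_of_facets hβ hA hB hi
    have := hx0 i hi.le
    omega
  · rintro ⟨hbox, hℓ0, hℓb⟩
    have hx0 : ∀ i ≤ ℓ, 0 ≤ x i := fun i hi => by
      rcases hi.lt_or_eq with h | rfl
      · rcases hbox i h with h | h <;> simp [h]
      · exact hℓ0
    have hT : ∀ k, 0 ≤ tailSum ((b : ℝ) + 1) ℓ x k := fun k => tailSum_nonneg (by linarith) hx0
    refine ⟨fun k hk => ?_, by exact_mod_cast hℓb, ?_⟩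
    · have : x k ≤ 1 := by rcases hbox k hk with h | h <;> simp [h]
      have : (x k : ℝ) ≤ 1 := by exact_mod_cast this
      linarith [hT k]
    · have : (0 : ℝ) ≤ x 0 := by exact_mod_cast hx0 0 (Nat.zero_le _)
      linarith [hT 0]

/-- the explicit simplex with `ℓ + 2` facets is a relaxation of the
box `X_b = {0,1}^ℓ × {0,…,b}`. -/
theorem box_simplex_relaxation (ℓ : ℕ) (b : ℤ) (hb : 0 < b) (z : Fin (ℓ + 1) → ℤ) :
    ((∀ k : Fin (ℓ + 1), k.val < ℓ →
        (z k : ℝ) ≤ 1 + ∑ i : Fin (ℓ + 1),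
          if k < i then (z i : ℝ) / ((b : ℝ) + 1) ^ (i.val + 1) else 0) ∧
      (z (Fin.last ℓ) : ℝ) ≤ (b : ℝ) ∧
      0 ≤ (z 0 : ℝ) + ∑ i : Fin (ℓ + 1),
        if 0 < i.val then (z i : ℝ) / ((b : ℝ) + 1) ^ (i.val + 1) else 0)
    ↔ ((∀ i : Fin (ℓ + 1), i.val < ℓ → z i = 0 ∨ z i = 1) ∧
        0 ≤ z (Fin.last ℓ) ∧ z (Fin.last ℓ) ≤ b) := by
  obtain ⟨x, rfl⟩ : ∃ x : ℕ → ℤ, z = fun i => x i.val :=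
    ⟨fun n => z (Fin.ofNat (ℓ + 1) n), by simp⟩
  simp only [Fin.lt_def, Fin.val_zero, Fin.val_last, sum_fin_ite_lt_eq_tailSum]
  have h := facet_inequalities_iff_box ℓ b hb x
  rwa [← Fin.forall_val_lt_iff, ← Fin.forall_val_lt_iff] at h
end

section
/- Let S_1, ..., S_k be discrete integer segments each of length at least 2 (with k ≥ 1) and T_1, ..., T_ℓ discrete segments of length 1, and let X = S_1 × ... × S_k × T_1 × ... × T_ℓ ⊆ ℤ^{k+ℓ}. Then the relaxation complexity of X equals 2k + ℓ: there is a relaxation of X with 2k + ℓ facets, and every relaxation requires at least 2k + ℓ inequalities. -/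
open Finset

set_option maxHeartbeats 2000000 in
theorem rc_upper (k ℓ : ℕ) (hk : 0 < k) (a b : Fin (k + ℓ) → ℤ)
    (hlong : ∀ i : Fin (k + ℓ), i.val < k → a i + 2 ≤ b i)
    (hshort : ∀ i : Fin (k + ℓ), k ≤ i.val → b i = a i + 1) :
    ∃ (A : Fin (2 * k + ℓ) → Fin (k + ℓ) → ℝ) (c : Fin (2 * k + ℓ) → ℝ),
      ∀ z : Fin (k + ℓ) → ℤ,
        (∀ i, ∑ j, A i j * (z j : ℝ) ≤ c i) ↔ (∀ j, a j ≤ z j ∧ z j ≤ b j) := by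
  classical
  have hkl : 0 < k + ℓ := by omega
  set i0 : Fin (k + ℓ) := ⟨0, hkl⟩ with hi0
  have hi0k : i0.val < k := hk
  set Δ : ℝ := ((b i0 : ℤ) : ℝ) - ((a i0 : ℤ) : ℝ) with hΔ
  have hΔ2 : (2 : ℝ) ≤ Δ := by
    have := hlong i0 hi0k
    have : ((a i0 : ℤ) : ℝ) + 2 ≤ ((b i0 : ℤ) : ℝ) := by exact_mod_cast this
    simp only [hΔ]; linarith
  set e : ℝ := 1 / 2 ^ (ℓ + 2) with he_def
  have he : 0 < e := by positivity
  set η : ℝ := e / (Δ + 1) with hη_def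
  have hη : 0 < η := by
    apply div_pos he; linarith
  have hηΔ : η * Δ ≤ e := by
    rw [hη_def, div_mul_eq_mul_div, div_le_iff₀ (by linarith : (0:ℝ) < Δ + 1)]
    nlinarith
  set eps : ℕ → ℝ := fun s => 2 ^ (s + 1) * e with heps_def
  have heps : ∀ s, 0 < eps s := by intro s; simp only [heps_def]; positivity
  have hepssum : ∀ t : ℕ, ∑ s ∈ range t, eps s = (2 ^ (t + 1) - 2) * e := by
    intro t
    induction t with
    | zero =>
      simp only [Finset.range_zero, Finset.sum_empty]
      norm_num
    | succ t ih =>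
      rw [Finset.sum_range_succ, ih]
      simp only [heps_def]
      rw [pow_succ]
      ring
  have hpowle : ∀ t : ℕ, t ≤ ℓ → (2 : ℝ) ^ (t + 1) * e ≤ 1 / 2 := by
    intro t htl
    have h1 : (2 : ℝ) ^ (t + 1) ≤ 2 ^ (ℓ + 1) := by
      apply pow_le_pow_right₀ (by norm_num)
      omega
    have h2 : (2 : ℝ) ^ (ℓ + 2) = 2 * 2 ^ (ℓ + 1) := by ring
    rw [he_def, h2]
    rw [mul_one_div, div_le_div_iff₀ (by positivity) (by norm_num)]
    nlinarith [pow_pos (show (0:ℝ) < 2 by norm_num) (ℓ + 1)]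
  set sidx : ℕ → Fin (k + ℓ) := fun s => if h : s < ℓ then ⟨k + s, by omega⟩ else i0 with hsidx
  have hsidx_val : ∀ s, s < ℓ → (sidx s).val = k + s := by
    intro s hs; simp only [hsidx]; rw [dif_pos hs]
  -- the matrix and right-hand sides
  set A : Fin (2 * k + ℓ) → Fin (k + ℓ) → ℝ := fun r j =>
    if r.val < k then (if j.val = r.val then 1 else 0)
    else if r.val < 2 * k - 1 then (if j.val = r.val - k + 1 then -1 else 0)
    else (if j.val = 0 then -η
          else if j.val < k then 0
          else if j.val - k < r.val - (2 * k - 1) then eps (j.val - k)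
          else if j.val - k = r.val - (2 * k - 1) then -1 else 0) with hA
  set C : Fin (2 * k + ℓ) → ℝ := fun r =>
    if h1 : r.val < k then ((b ⟨r.val, by omega⟩ : ℤ) : ℝ)
    else if h2 : r.val < 2 * k - 1 then -((a ⟨r.val - k + 1, by omega⟩ : ℤ) : ℝ)
    else (∑ s ∈ range (r.val - (2 * k - 1)), eps s * (((a (sidx s) : ℤ) : ℝ) + 1))
         + (if r.val - (2 * k - 1) < ℓ then -((a (sidx (r.val - (2 * k - 1))) : ℤ) : ℝ) else 0)
         - η * ((a i0 : ℤ) : ℝ) with hC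
  refine ⟨A, C, ?_⟩
  intro z
  set w : ℕ → ℝ := fun s => ((z (sidx s) : ℤ) : ℝ) - ((a (sidx s) : ℤ) : ℝ) with hw
  set D : ℕ → ℝ := fun t => (∑ s ∈ range t, eps s * (1 - w s))
      + η * (((z i0 : ℤ) : ℝ) - ((a i0 : ℤ) : ℝ)) with hD
  -- row U i
  have hrowU : ∀ (i : ℕ) (hi : i < k),
      ((∑ j, A ⟨i, by omega⟩ j * (z j : ℝ)) ≤ C ⟨i, by omega⟩)
        ↔ ((z ⟨i, by omega⟩ : ℝ) ≤ ((b ⟨i, by omega⟩ : ℤ) : ℝ)) := by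
    intro i hi
    have hsum : (∑ j, A ⟨i, by omega⟩ j * (z j : ℝ)) = (z ⟨i, by omega⟩ : ℝ) := by
      rw [Finset.sum_eq_single (⟨i, by omega⟩ : Fin (k + ℓ))]
      · simp [hA, Fin.val_mk, hi]
      · intro j _ hj
        have hjv : j.val ≠ i := by
          intro hc; exact hj (Fin.ext hc)
        simp [hA, Fin.val_mk, hi, hjv]
      · intro hmem; exact absurd (Finset.mem_univ _) hmem
    have hcc : C ⟨i, by omega⟩ = ((b ⟨i, by omega⟩ : ℤ) : ℝ) := by
      simp only [hC, Fin.val_mk]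
      rw [dif_pos (show i < k from hi)]
    rw [hsum, hcc]
  -- row L i  (for 1 ≤ i < k), row index k + i - 1
  have hrowL : ∀ (i : ℕ) (h1 : 1 ≤ i) (h2 : i < k),
      ((∑ j, A ⟨k + i - 1, by omega⟩ j * (z j : ℝ)) ≤ C ⟨k + i - 1, by omega⟩)
        ↔ (-(z ⟨i, by omega⟩ : ℝ) ≤ -((a ⟨i, by omega⟩ : ℤ) : ℝ)) := by
    intro i h1 h2
    have hr1 : ¬ (k + i - 1 < k) := by omega
    have hr2 : k + i - 1 < 2 * k - 1 := by omega
    have hr3 : k + i - 1 - k + 1 = i := by omega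
    have hsum : (∑ j, A ⟨k + i - 1, by omega⟩ j * (z j : ℝ)) = -(z ⟨i, by omega⟩ : ℝ) := by
      rw [Finset.sum_eq_single (⟨i, by omega⟩ : Fin (k + ℓ))]
      · simp [hA, Fin.val_mk, hr1, hr2, hr3]
      · intro j _ hj
        have hjv : j.val ≠ i := fun hc => hj (Fin.ext hc)
        simp [hA, Fin.val_mk, hr1, hr2, hr3, hjv]
      · intro hmem; exact absurd (Finset.mem_univ _) hmem
    have hcc : C ⟨k + i - 1, by omega⟩ = -((a ⟨i, by omega⟩ : ℤ) : ℝ) := by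
      simp only [hC, Fin.val_mk]
      rw [dif_neg hr1, dif_pos hr2]
      congr 3
      exact Fin.ext (by simp only [Fin.val_mk]; omega)
    rw [hsum, hcc]
  -- row G t (for t ≤ ℓ), row index 2k - 1 + t
  have hrowG : ∀ (t : ℕ) (htl : t ≤ ℓ),
      ((∑ j, A ⟨2 * k - 1 + t, by omega⟩ j * (z j : ℝ)) ≤ C ⟨2 * k - 1 + t, by omega⟩)
        ↔ ((if t < ℓ then -(w t) else 0) ≤ D t) := by
    intro t htl
    have hr1 : ¬ (2 * k - 1 + t < k) := by omega
    have hr2 : ¬ (2 * k - 1 + t < 2 * k - 1) := by omega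
    have hr3 : 2 * k - 1 + t - (2 * k - 1) = t := by omega
    -- the coefficient function on short coordinates
    have hLHS : (∑ j, A ⟨2 * k - 1 + t, by omega⟩ j * (z j : ℝ))
        = -η * ((z i0 : ℤ) : ℝ) + ((∑ s ∈ range t, eps s * ((z (sidx s) : ℤ) : ℝ))
          + (if t < ℓ then -((z (sidx t) : ℤ) : ℝ) else 0)) := by
      rw [Fin.sum_univ_add (f := fun j => A ⟨2 * k - 1 + t, by omega⟩ j * (z j : ℝ))]
      have hfirst : (∑ i : Fin k, A ⟨2 * k - 1 + t, by omega⟩ (Fin.castAdd ℓ i) * (z (Fin.castAdd ℓ i) : ℝ))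
          = -η * ((z i0 : ℤ) : ℝ) := by
        rw [Finset.sum_eq_single (⟨0, hk⟩ : Fin k)]
        · have hcast : Fin.castAdd ℓ (⟨0, hk⟩ : Fin k) = i0 := by
            apply Fin.ext; simp [hi0]
          rw [hcast]
          simp only [hA, Fin.val_mk]
          rw [if_neg hr1, if_neg hr2, if_pos]
          simp [hi0]
        · intro i _ hi
          have hiv : (Fin.castAdd ℓ i).val ≠ 0 := by
            simp only [Fin.coe_castAdd]
            intro hc; exact hi (Fin.ext hc)
          have hivk : (Fin.castAdd ℓ i).val < k := by
            simp only [Fin.coe_castAdd]; exact i.isLt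
          simp only [hA, Fin.val_mk]
          rw [if_neg hr1, if_neg hr2, if_neg hiv, if_pos hivk, zero_mul]
        · intro hmem; exact absurd (Finset.mem_univ _) hmem
      have hsecond : (∑ s : Fin ℓ, A ⟨2 * k - 1 + t, by omega⟩ (Fin.natAdd k s) * (z (Fin.natAdd k s) : ℝ))
          = (∑ s ∈ range t, eps s * ((z (sidx s) : ℤ) : ℝ))
            + (if t < ℓ then -((z (sidx t) : ℤ) : ℝ) else 0) := by
        have hterm : ∀ s : Fin ℓ,
            A ⟨2 * k - 1 + t, by omega⟩ (Fin.natAdd k s) * (z (Fin.natAdd k s) : ℝ)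
            = (if s.val < t then eps s.val * ((z (sidx s.val) : ℤ) : ℝ) else 0)
              + (if s.val = t then -((z (sidx s.val) : ℤ) : ℝ) else 0) := by
          intro s
          have hnv : (Fin.natAdd k s).val = k + s.val := rfl
          have hz : z (Fin.natAdd k s) = z (sidx s.val) := by
            congr 1
            apply Fin.ext
            rw [hsidx_val s.val s.isLt, hnv]
          simp only [hA, Fin.val_mk]
          rw [if_neg hr1, if_neg hr2, hnv]
          rw [if_neg (by omega : ¬ k + s.val = 0), if_neg (by omega : ¬ k + s.val < k)]
          have hsub : k + s.val - k = s.val := by omega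
          rw [hsub, hr3, hz]
          by_cases hst : s.val < t
          · rw [if_pos hst, if_pos hst, if_neg (by omega), add_zero]
          · rw [if_neg hst, if_neg hst]
            by_cases hse : s.val = t
            · rw [if_pos hse, if_pos hse, zero_add]; ring
            · rw [if_neg hse, if_neg hse, zero_mul, add_zero]
        rw [Finset.sum_congr rfl (fun s _ => hterm s), Finset.sum_add_distrib]
        congr 1
        · rw [Fin.sum_univ_eq_sum_range
            (fun s => if s < t then eps s * ((z (sidx s) : ℤ) : ℝ) else 0) ℓ]
          rw [← Finset.sum_filter]
          apply Finset.sum_congr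
          · ext x; simp only [Finset.mem_filter, Finset.mem_range]
            constructor
            · rintro ⟨_, h⟩; exact h
            · intro h; exact ⟨by omega, h⟩
          · intro x _; rfl
        · rw [Fin.sum_univ_eq_sum_range
            (fun s => if s = t then -((z (sidx s) : ℤ) : ℝ) else 0) ℓ]
          rw [Finset.sum_ite_eq' (range ℓ) t (fun s => -((z (sidx s) : ℤ) : ℝ))]
          simp [Finset.mem_range]
      rw [hfirst, hsecond]
    have hRHS : C ⟨2 * k - 1 + t, by omega⟩
        = (∑ s ∈ range t, eps s * (((a (sidx s) : ℤ) : ℝ) + 1))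
          + (if t < ℓ then -((a (sidx t) : ℤ) : ℝ) else 0)
          - η * ((a i0 : ℤ) : ℝ) := by
      simp only [hC, Fin.val_mk]
      rw [dif_neg hr1, dif_neg hr2]
      rw [show ((⟨2 * k - 1 + t, by omega⟩ : Fin (2 * k + ℓ)).val - (2 * k - 1)) = t from hr3]
    rw [hLHS, hRHS]
    have hkey : (∑ s ∈ range t, eps s * (((a (sidx s) : ℤ) : ℝ) + 1))
        - (∑ s ∈ range t, eps s * ((z (sidx s) : ℤ) : ℝ))
        = ∑ s ∈ range t, eps s * (1 - w s) := by
      rw [← Finset.sum_sub_distrib]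
      apply Finset.sum_congr rfl
      intro s _
      simp only [hw]
      ring
    simp only [hD]
    constructor
    · intro hh
      by_cases htℓ : t < ℓ
      · simp only [if_pos htℓ] at hh ⊢
        simp only [hw]
        linarith [hkey]
      · simp only [if_neg htℓ] at hh ⊢
        linarith [hkey]
    · intro hh
      by_cases htℓ : t < ℓ
      · simp only [if_pos htℓ] at hh ⊢
        simp only [hw] at hh
        linarith [hkey]
      · simp only [if_neg htℓ] at hh ⊢
        linarith [hkey]
  constructor
  · -- rows imply membership in the box
    intro hrow
    have hU : ∀ (i : ℕ) (hi : i < k), (z ⟨i, by omega⟩ : ℝ) ≤ ((b ⟨i, by omega⟩ : ℤ) : ℝ) :=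
      fun i hi => (hrowU i hi).1 (hrow ⟨i, by omega⟩)
    have hL : ∀ (i : ℕ) (h1 : 1 ≤ i) (h2 : i < k),
        -(z ⟨i, by omega⟩ : ℝ) ≤ -((a ⟨i, by omega⟩ : ℤ) : ℝ) :=
      fun i h1 h2 => (hrowL i h1 h2).1 (hrow ⟨k + i - 1, by omega⟩)
    have hG : ∀ (t : ℕ), t ≤ ℓ → ((if t < ℓ then -(w t) else 0) ≤ D t) :=
      fun t htl => (hrowG t htl).1 (hrow ⟨2 * k - 1 + t, by omega⟩)
    have hwint : ∀ s, w s = ((z (sidx s) - a (sidx s) : ℤ) : ℝ) := by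
      intro s; simp only [hw]; push_cast; ring
    have hz0b : ((z i0 : ℤ) : ℝ) ≤ ((b i0 : ℤ) : ℝ) := hU 0 hk
    have hstep : ∀ u, u < ℓ → D u < 0 → D (u + 1) < 0 := by
      intro u hu hDu
      have h1 : -(w u) ≤ D u := by
        have := hG u (le_of_lt hu)
        rwa [if_pos hu] at this
      have hw1 : 1 ≤ w u := by
        have hpos : (0 : ℝ) < w u := by linarith
        rw [hwint u] at hpos ⊢
        have h2 : (0 : ℤ) < z (sidx u) - a (sidx u) := by exact_mod_cast hpos
        exact_mod_cast h2
      have hD1 : D (u + 1) = D u + eps u * (1 - w u) := by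
        simp only [hD]
        rw [Finset.sum_range_succ]
        ring
      nlinarith [heps u]
    have hDl : (0 : ℝ) ≤ D ℓ := by
      have := hG ℓ le_rfl
      rwa [if_neg (lt_irrefl ℓ)] at this
    have hfalse : ∀ u, u ≤ ℓ → D u < 0 → False := by
      have climb : ∀ n u, u + n = ℓ → D u < 0 → False := by
        intro n
        induction n with
        | zero =>
          intro u hu hDu
          rw [show u = ℓ from by omega] at hDu
          linarith
        | succ n ih =>
          intro u hu hDu
          exact ih (u + 1) (by omega) (hstep u (by omega) hDu)
      intro u hu hDu
      exact climb (ℓ - u) u (by omega) hDu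
    have hz0a : ((a i0 : ℤ) : ℝ) ≤ ((z i0 : ℤ) : ℝ) := by
      by_contra hc
      push_neg at hc
      have hint : ((z i0 : ℤ) : ℝ) - ((a i0 : ℤ) : ℝ) ≤ -1 := by
        have h2 : z i0 < a i0 := by exact_mod_cast hc
        have h3 : z i0 - a i0 ≤ -1 := by omega
        have h4 : ((z i0 - a i0 : ℤ) : ℝ) ≤ ((-1 : ℤ) : ℝ) := by exact_mod_cast h3
        push_cast at h4
        linarith
      have hD0 : D 0 < 0 := by
        simp only [hD, Finset.range_zero, Finset.sum_empty, zero_add]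
        nlinarith
      exact hfalse 0 (by omega) hD0
    have hDub : ∀ t, t ≤ ℓ → (∀ s, s < t → 0 ≤ w s ∧ w s ≤ 1) →
        0 ≤ D t ∧ D t ≤ (2 ^ (t + 1) - 1) * e := by
      intro t htl hgd
      have hsum_ub : ∑ s ∈ range t, eps s * (1 - w s) ≤ ∑ s ∈ range t, eps s := by
        apply Finset.sum_le_sum
        intro s hs
        have h1 := hgd s (Finset.mem_range.mp hs)
        have h2 := heps s
        nlinarith
      have hsum_lb : (0 : ℝ) ≤ ∑ s ∈ range t, eps s * (1 - w s) := by
        apply Finset.sum_nonneg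
        intro s hs
        have h1 := hgd s (Finset.mem_range.mp hs)
        have h2 := heps s
        nlinarith
      have hetaub : η * (((z i0 : ℤ) : ℝ) - ((a i0 : ℤ) : ℝ)) ≤ e := by
        have h1 : ((z i0 : ℤ) : ℝ) - ((a i0 : ℤ) : ℝ) ≤ Δ := by
          simp only [hΔ]
          linarith
        calc η * (((z i0 : ℤ) : ℝ) - ((a i0 : ℤ) : ℝ)) ≤ η * Δ :=
              mul_le_mul_of_nonneg_left h1 (le_of_lt hη)
          _ ≤ e := hηΔ
      have hetalb : 0 ≤ η * (((z i0 : ℤ) : ℝ) - ((a i0 : ℤ) : ℝ)) :=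
        mul_nonneg (le_of_lt hη) (by linarith)
      have hring : (2 ^ (t + 1) - 2) * e + e = (2 ^ (t + 1) - 1) * e := by ring
      rw [hepssum t] at hsum_ub
      constructor
      · simp only [hD]; linarith
      · simp only [hD]; linarith
    have hgood : ∀ t, t ≤ ℓ → ∀ s, s < t → 0 ≤ w s ∧ w s ≤ 1 := by
      intro t
      induction t with
      | zero => intro _ s hs; exact absurd hs (Nat.not_lt_zero s)
      | succ t ih =>
        intro htl s hs
        have ihg : ∀ s', s' < t → 0 ≤ w s' ∧ w s' ≤ 1 := ih (by omega)
        rcases Nat.lt_succ_iff_lt_or_eq.mp hs with hs' | hs'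
        · exact ihg s hs'
        · subst hs'
          have htℓ : s < ℓ := by omega
          have hDt := hDub s (by omega) ihg
          have hDub1 : D s < 1 := by
            have h2 : (2 : ℝ) ^ (s + 1) * e ≤ 1 / 2 := hpowle s (by omega)
            have h3 : ((2 : ℝ) ^ (s + 1) - 1) * e = 2 ^ (s + 1) * e - e := by ring
            linarith [hDt.2, he]
          have h1 : -(w s) ≤ D s := by
            have := hG s (by omega)
            rwa [if_pos htℓ] at this
          have hw0 : 0 ≤ w s := by
            have hgt : (-1 : ℝ) < w s := by linarith
            rw [hwint s] at hgt ⊢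
            have h2 : (-1 : ℤ) < z (sidx s) - a (sidx s) := by exact_mod_cast hgt
            have h3 : (0 : ℤ) ≤ z (sidx s) - a (sidx s) := by omega
            exact_mod_cast h3
          have hw1 : w s ≤ 1 := by
            by_contra hc
            push_neg at hc
            have hw2 : (2 : ℝ) ≤ w s := by
              rw [hwint s] at hc ⊢
              have h2 : (1 : ℤ) < z (sidx s) - a (sidx s) := by exact_mod_cast hc
              have h3 : (2 : ℤ) ≤ z (sidx s) - a (sidx s) := by omega
              exact_mod_cast h3
            have hD1 : D (s + 1) = D s + eps s * (1 - w s) := by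
              simp only [hD]
              rw [Finset.sum_range_succ]
              ring
            have h7 : eps s = 2 ^ (s + 1) * e := by simp only [heps_def]
            have hDneg : D (s + 1) < 0 := by nlinarith [he, hDt.2]
            exact hfalse (s + 1) (by omega) hDneg
          exact ⟨hw0, hw1⟩
    intro j
    by_cases hjk : j.val < k
    · constructor
      · by_cases hj0 : j.val = 0
        · have hji : j = i0 := Fin.ext hj0
          rw [hji]
          exact_mod_cast hz0a
        · have h1 := hL j.val (by omega) hjk
          have h2 : (⟨j.val, by omega⟩ : Fin (k + ℓ)) = j := Fin.ext rfl
          rw [h2] at h1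
          have h3 : ((a j : ℤ) : ℝ) ≤ ((z j : ℤ) : ℝ) := by linarith
          exact_mod_cast h3
      · have h1 := hU j.val hjk
        have h2 : (⟨j.val, by omega⟩ : Fin (k + ℓ)) = j := Fin.ext rfl
        rw [h2] at h1
        exact_mod_cast h1
    · have hsv : j.val - k < ℓ := by
        have := j.isLt; omega
      have hsj : sidx (j.val - k) = j := by
        apply Fin.ext
        rw [hsidx_val _ hsv]
        omega
      have hwj := hgood ℓ le_rfl (j.val - k) hsv
      rw [hwint, hsj] at hwj
      have hb := hshort j (by omega)
      have h1 : (0 : ℤ) ≤ z j - a j := by exact_mod_cast hwj.1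
      have h2 : (z j - a j : ℤ) ≤ 1 := by exact_mod_cast hwj.2
      constructor
      · omega
      · omega
  · -- membership in the box implies all the rows
    intro hbox i
    by_cases h1 : i.val < k
    · apply (hrowU i.val h1).2
      have := (hbox ⟨i.val, by omega⟩).2
      exact_mod_cast this
    · by_cases h2 : i.val < 2 * k - 1
      · have hii1 : 1 ≤ i.val - k + 1 := by omega
        have hii2 : i.val - k + 1 < k := by omega
        have h3 := (hrowL (i.val - k + 1) hii1 hii2).2
        have h4 : (⟨k + (i.val - k + 1) - 1, by omega⟩ : Fin (2 * k + ℓ)) = i :=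
          Fin.ext (by simp only [Fin.val_mk]; omega)
        rw [h4] at h3
        apply h3
        have h5 := (hbox ⟨i.val - k + 1, by omega⟩).1
        have h6 : ((a ⟨i.val - k + 1, by omega⟩ : ℤ) : ℝ) ≤ ((z ⟨i.val - k + 1, by omega⟩ : ℤ) : ℝ) := by
          exact_mod_cast h5
        linarith
      · set t := i.val - (2 * k - 1) with ht
        have htl : t ≤ ℓ := by
          have := i.isLt; omega
        have h3 := (hrowG t htl).2
        have h4 : (⟨2 * k - 1 + t, by omega⟩ : Fin (2 * k + ℓ)) = i :=
          Fin.ext (by simp only [Fin.val_mk]; omega)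
        rw [h4] at h3
        apply h3
        -- show the defining inequality of row G t holds on the box
        have hwge : ∀ s, s < ℓ → 0 ≤ w s ∧ w s ≤ 1 := by
          intro s hs
          have hv : (sidx s).val = k + s := hsidx_val s hs
          have hb := hshort (sidx s) (by omega)
          have hz := hbox (sidx s)
          have hA1 : (0 : ℤ) ≤ z (sidx s) - a (sidx s) := by omega
          have hA2 : (z (sidx s) - a (sidx s) : ℤ) ≤ 1 := by omega
          constructor
          · simp only [hw]
            have h5 : ((0 : ℤ) : ℝ) ≤ ((z (sidx s) - a (sidx s) : ℤ) : ℝ) := by exact_mod_cast hA1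
            push_cast at h5
            linarith
          · simp only [hw]
            have h5 : ((z (sidx s) - a (sidx s) : ℤ) : ℝ) ≤ ((1 : ℤ) : ℝ) := by exact_mod_cast hA2
            push_cast at h5
            linarith
        have hDpos : 0 ≤ D t := by
          simp only [hD]
          have hsum_lb : (0 : ℝ) ≤ ∑ s ∈ range t, eps s * (1 - w s) := by
            apply Finset.sum_nonneg
            intro s hs
            have hsl : s < ℓ := by
              have := Finset.mem_range.mp hs; omega
            have h1 := hwge s hsl
            have h2 := heps s
            nlinarith
          have hz0 := (hbox i0).1
          have hz0' : ((a i0 : ℤ) : ℝ) ≤ ((z i0 : ℤ) : ℝ) := by exact_mod_cast hz0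
          have := mul_nonneg (le_of_lt hη) (by linarith : (0:ℝ) ≤ ((z i0 : ℤ) : ℝ) - ((a i0 : ℤ) : ℝ))
          linarith
        by_cases htℓ : t < ℓ
        · rw [if_pos htℓ]
          have := (hwge t htℓ).1
          linarith
        · rw [if_neg htℓ]
          exact hDpos


theorem rc_lower (k ℓ : ℕ) (hk : 0 < k) (a b : Fin (k + ℓ) → ℤ)
    (hlong : ∀ i : Fin (k + ℓ), i.val < k → a i + 2 ≤ b i)
    (hshort : ∀ i : Fin (k + ℓ), k ≤ i.val → b i = a i + 1)
    (m : ℕ) (A : Fin m → Fin (k + ℓ) → ℝ) (c : Fin m → ℝ)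
    (h : ∀ z : Fin (k + ℓ) → ℤ,
      (∀ i, ∑ j, A i j * (z j : ℝ) ≤ c i) ↔ (∀ j, a j ≤ z j ∧ z j ≤ b j)) :
    2 * k + ℓ ≤ m := by
  classical
  -- coordinate (as a value) associated to a hiding point index
  set cI : Fin (2 * k + ℓ) → ℕ := fun t => if t.val < k then t.val else t.val - k with hcI
  have hcv : ∀ t : Fin (2 * k + ℓ),
      (t.val < k ∧ cI t = t.val) ∨ (¬ t.val < k ∧ cI t = t.val - k) := by
    intro t
    by_cases g : t.val < k
    · left; exact ⟨g, by simp [hcI, g]⟩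
    · right; exact ⟨g, by simp [hcI, g]⟩
  have hcIlt : ∀ t : Fin (2 * k + ℓ), cI t < k + ℓ := by
    intro t; have := t.isLt; have := hcv t; omega
  set dflt : Fin (k + ℓ) → ℤ := fun j => if j.val < k then a j + 1 else a j with hdflt
  set specAt : Fin (2 * k + ℓ) → Fin (k + ℓ) → ℤ := fun t j =>
    if t.val < k then a j - 1
    else if t.val < 2 * k then 2 * b j - a j - 1
    else a j + 2 with hspecAt
  set H : Fin (2 * k + ℓ) → Fin (k + ℓ) → ℤ :=
    fun t j => if j.val = cI t then specAt t j else dflt j with hH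
  set midv : Fin (2 * k + ℓ) → Fin (k + ℓ) → ℤ := fun t j =>
    if t.val < k then a j else if t.val < 2 * k then b j else a j + 1 with hmidv
  have hdflt_box : ∀ j, a j ≤ dflt j ∧ dflt j ≤ b j := by
    intro j
    by_cases hj : j.val < k
    · have := hlong j hj; simp only [hdflt]; split_ifs <;> omega
    · have := hshort j (by omega); simp only [hdflt]; split_ifs <;> omega
  -- H t is not in the box
  have hHout : ∀ t, ¬ (∀ j, a j ≤ H t j ∧ H t j ≤ b j) := by
    intro t hall
    set j : Fin (k + ℓ) := ⟨cI t, hcIlt t⟩ with hj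
    have hje : j.val = cI t := rfl
    have hjj := hall j
    have hc := hcv t
    have ht := t.isLt
    simp only [hH, hspecAt, if_pos hje] at hjj
    by_cases hjk : j.val < k
    · have := hlong j hjk
      split_ifs at hjj <;> omega
    · have := hshort j (by omega)
      split_ifs at hjj <;> omega
  have hviol : ∀ t : Fin (2 * k + ℓ), ∃ i : Fin m, c i < ∑ j, A i j * ((H t j : ℤ) : ℝ) := by
    intro t
    have h1 : ¬ (∀ i, ∑ j, A i j * ((H t j : ℤ) : ℝ) ≤ c i) := fun hr => hHout t ((h (H t)).1 hr)
    push_neg at h1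
    exact h1
  choose v hv using hviol
  have hvinj : Function.Injective v := by
    intro t t' hvt
    by_contra hne
    have hnv : t.val ≠ t'.val := fun hc => hne (Fin.ext hc)
    have ht := t.isLt; have ht' := t'.isLt
    have f1 := hcv t; have f2 := hcv t'
    set μ : Fin (k + ℓ) → ℤ := fun j =>
      if j.val = cI t then (if j.val = cI t' then b j - 1 else midv t j)
      else if j.val = cI t' then midv t' j else dflt j with hμ
    have hμbox : ∀ j, a j ≤ μ j ∧ μ j ≤ b j := by
      intro j
      by_cases hjk : j.val < k
      · have := hlong j hjk
        simp only [hμ, hmidv, hdflt]; split_ifs <;> omega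
      · have := hshort j (by omega)
        simp only [hμ, hmidv, hdflt]; split_ifs <;> omega
    have h2μ : ∀ j, 2 * μ j = H t j + H t' j := by
      intro j
      have hjlt := j.isLt
      simp only [hμ, hH, hspecAt, hdflt, hmidv]
      split_ifs <;> omega
    -- derive a contradiction from the shared violated row
    set r := v t with hr
    have hμle : ∑ j, A r j * ((μ j : ℤ) : ℝ) ≤ c r := ((h μ).2 hμbox) r
    have h1 := hv t
    have h2 := hv t'
    rw [← hvt] at h2
    have hcast : ∀ j, ((H t j : ℤ) : ℝ) + ((H t' j : ℤ) : ℝ) = 2 * ((μ j : ℤ) : ℝ) := by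
      intro j
      have h' : ((H t j + H t' j : ℤ) : ℝ) = ((2 * μ j : ℤ) : ℝ) := by rw [h2μ j]
      push_cast at h'
      linarith
    have hsum : (∑ j, A r j * ((H t j : ℤ) : ℝ)) + (∑ j, A r j * ((H t' j : ℤ) : ℝ))
        = 2 * ∑ j, A r j * ((μ j : ℤ) : ℝ) := by
      rw [← Finset.sum_add_distrib, Finset.mul_sum]
      apply Finset.sum_congr rfl
      intro j _
      rw [← mul_add, hcast j]
      ring
    linarith
  have := Fintype.card_le_of_injective v hvinj
  simpa using this


/-- the relaxation complexity of a discrete box with `k` segments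
of length at least `2` and `ℓ` segments of length `1` equals `2k + ℓ`. -/
theorem rc_discrete_box (k ℓ : ℕ) (hk : 0 < k) (a b : Fin (k + ℓ) → ℤ)
    (hlong : ∀ i : Fin (k + ℓ), i.val < k → a i + 2 ≤ b i)
    (hshort : ∀ i : Fin (k + ℓ), k ≤ i.val → b i = a i + 1) :
    IsLeast {m : ℕ | ∃ (A : Fin m → Fin (k + ℓ) → ℝ) (c : Fin m → ℝ),
        ∀ z : Fin (k + ℓ) → ℤ,
          (∀ i, ∑ j, A i j * (z j : ℝ) ≤ c i) ↔ (∀ j, a j ≤ z j ∧ z j ≤ b j)}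
      (2 * k + ℓ) := by
  constructor
  · exact rc_upper k ℓ hk a b hlong hshort
  · rintro m ⟨A, c, h⟩
    exact rc_lower k ℓ hk a b hlong hshort m A c h
end

section
/- Let X = S_1 × ... × S_k × T_1 × ... × T_ℓ ⊆ ℤ^{k+ℓ} where S_i = {a_i, ..., b_i} with a_i < 0 < b_i are segments of length ≥ 2 and T_j = {0,1}. Then the set H consisting of the points (a_i − 1)e_i and (b_i + 1)e_i for i ∈ [k] together with the points 2 e_{k+j} for j ∈ [ℓ] is a hiding set for X of size 2k + ℓ: for any two distinct points p, q ∈ H, the midpoint (p+q)/2 lies in conv(X). -/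
lemma single_eq_single {n : ℕ} {i j : Fin n} {c d : ℤ} (hc : c ≠ 0)
    (h : (Pi.single i c : Fin n → ℤ) = Pi.single j d) : i = j ∧ c = d := by
  have h1 := congrFun h i
  rw [Pi.single_eq_same, Pi.single_apply] at h1
  split_ifs at h1 with hij
  · exact ⟨hij, h1⟩
  · exact absurd h1 hc

/-- the set `H` of points `(aᵢ−1)eᵢ`, `(bᵢ+1)eᵢ` (long segments)
and `2e_{k+j}` (unit segments) is a hiding set of size `2k + ℓ` for the box `X`:
the midpoint of any two distinct points of `H` lies in `conv(X)`. -/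
theorem box_hiding_set (k ℓ : ℕ) (a b : Fin (k + ℓ) → ℤ)
    (ha : ∀ i : Fin (k + ℓ), i.val < k → a i < 0 ∧ 0 < b i)
    (hT : ∀ i : Fin (k + ℓ), k ≤ i.val → a i = 0 ∧ b i = 1)
    (X : Set (Fin (k + ℓ) → ℤ)) (hXdef : X = {z | ∀ j, a j ≤ z j ∧ z j ≤ b j})
    (H : Set (Fin (k + ℓ) → ℤ))
    (hHdef : H = {w | ∃ i : Fin (k + ℓ),
      (i.val < k ∧ (w = Pi.single i (a i - 1) ∨ w = Pi.single i (b i + 1))) ∨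
      (k ≤ i.val ∧ w = Pi.single i 2)}) :
    (∀ p ∈ H, p ∉ X) ∧
    (∀ p ∈ H, ∀ q ∈ H, p ≠ q →
      ((1 / 2 : ℝ) • (toR p + toR q)) ∈ convexHull ℝ (toR '' X)) ∧
    H.ncard = 2 * k + ℓ := by
  have h0 : ∀ j : Fin (k + ℓ), a j ≤ 0 ∧ 0 ≤ b j := by
    intro j
    rcases lt_or_ge j.val k with h | h
    · exact ⟨(ha j h).1.le, (ha j h).2.le⟩
    · exact ⟨(hT j h).1.le, by rw [(hT j h).2]; norm_num⟩
  have singleX : ∀ (i : Fin (k + ℓ)) (s : ℤ), a i ≤ s → s ≤ b i →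
      (Pi.single i s : Fin (k + ℓ) → ℤ) ∈ X := by
    intro i s h1 h2
    rw [hXdef]
    intro j
    rw [Pi.single_apply]
    rcases h0 j with ⟨hj1, hj2⟩
    split_ifs with e
    · subst e; exact ⟨h1, h2⟩
    · exact ⟨hj1, hj2⟩
  have memX2 : ∀ (i i' : Fin (k + ℓ)), i ≠ i' → ∀ (s s' : ℤ), a i ≤ s → s ≤ b i →
      a i' ≤ s' → s' ≤ b i' →
      ((Pi.single i s : Fin (k + ℓ) → ℤ) + Pi.single i' s') ∈ X := by
    intro i i' hne s s' h1 h2 h3 h4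
    rw [hXdef]
    intro j
    rcases h0 j with ⟨hj1, hj2⟩
    simp only [Pi.add_apply, Pi.single_apply]
    split_ifs with e1 e2 e2
    · exact absurd (e1.symm.trans e2) hne
    · subst e1; constructor <;> omega
    · subst e2; constructor <;> omega
    · constructor <;> omega
  refine ⟨?_, ?_, ?_⟩
  · -- H ∩ X = ∅
    intro p hp hpX
    rw [hHdef] at hp
    rw [hXdef] at hpX
    obtain ⟨i, ⟨hk, h1 | h1⟩ | ⟨hk, h1⟩⟩ := hp
    · have h2 := (hpX i).1
      rw [h1, Pi.single_eq_same] at h2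
      omega
    · have h2 := (hpX i).2
      rw [h1, Pi.single_eq_same] at h2
      omega
    · have h2 := (hpX i).2
      rw [h1, Pi.single_eq_same] at h2
      have h3 := (hT i hk).2
      omega
  · -- hiding property
    have decomp : ∀ (w : Fin (k + ℓ) → ℤ) (i : Fin (k + ℓ)),
        ((i.val < k ∧ (w = Pi.single i (a i - 1) ∨ w = Pi.single i (b i + 1))) ∨
          (k ≤ i.val ∧ w = Pi.single i 2)) →
        ∃ s t : ℤ, w = Pi.single i (s + t) ∧ a i ≤ s ∧ s ≤ b i ∧ a i ≤ t ∧ t ≤ b i := by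
      intro w i hi
      rcases hi with ⟨hk, h1 | h1⟩ | ⟨hk, h1⟩
      · obtain ⟨hb1, hb2⟩ := ha i hk
        exact ⟨a i, -1, by rw [h1]; congr 1; try ring, by omega, by omega, by omega, by omega⟩
      · obtain ⟨hb1, hb2⟩ := ha i hk
        exact ⟨b i, 1, by rw [h1], by omega, by omega, by omega, by omega⟩
      · obtain ⟨hb1, hb2⟩ := hT i hk
        exact ⟨1, 1, by rw [h1]; congr 1, by omega, by omega, by omega, by omega⟩
    have key : ∀ p ∈ H, ∀ q ∈ H, p ≠ q → ∃ x y, x ∈ X ∧ y ∈ X ∧ x + y = p + q := by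
      intro p hp q hq hpq
      rw [hHdef] at hp hq
      obtain ⟨i, hi⟩ := hp
      obtain ⟨i', hi'⟩ := hq
      by_cases hii : i = i'
      · subst hii
        have hab : a i ≤ b i := le_trans (h0 i).1 (h0 i).2
        rcases hi with ⟨hk, h1 | h1⟩ | ⟨hk, h1⟩ <;>
          rcases hi' with ⟨hk', h2 | h2⟩ | ⟨hk', h2⟩
        · exact absurd (h1.trans h2.symm) hpq
        · refine ⟨Pi.single i (a i), Pi.single i (b i),
            singleX i (a i) le_rfl hab, singleX i (b i) hab le_rfl, ?_⟩
          rw [h1, h2, ← Pi.single_add, ← Pi.single_add]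
          congr 1; ring
        · omega
        · refine ⟨Pi.single i (a i), Pi.single i (b i),
            singleX i (a i) le_rfl hab, singleX i (b i) hab le_rfl, ?_⟩
          rw [h1, h2, ← Pi.single_add, ← Pi.single_add]
          congr 1; ring
        · exact absurd (h1.trans h2.symm) hpq
        · omega
        · omega
        · omega
        · exact absurd (h1.trans h2.symm) hpq
      · obtain ⟨s, t, hps, hs1, hs2, ht1, ht2⟩ := decomp p i hi
        obtain ⟨s', t', hqs, hs1', hs2', ht1', ht2'⟩ := decomp q i' hi'
        refine ⟨Pi.single i s + Pi.single i' s', Pi.single i t + Pi.single i' t',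
          memX2 i i' hii s s' hs1 hs2 hs1' hs2',
          memX2 i i' hii t t' ht1 ht2 ht1' ht2', ?_⟩
        rw [hps, hqs, Pi.single_add, Pi.single_add]
        abel
    intro p hp q hq hpq
    obtain ⟨x, y, hx, hy, hxy⟩ := key p hp q hq hpq
    have hR : toR p + toR q = toR x + toR y := by
      funext j
      have h1 := congrFun hxy j
      simp only [Pi.add_apply] at h1 ⊢
      simp only [toR]
      exact_mod_cast h1.symm
    rw [hR]
    have hx' : toR x ∈ convexHull ℝ (toR '' X) := subset_convexHull ℝ _ ⟨x, hx, rfl⟩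
    have hy' : toR y ∈ convexHull ℝ (toR '' X) := subset_convexHull ℝ _ ⟨y, hy, rfl⟩
    have hc := (convex_convexHull ℝ (toR '' X)) hx' hy'
      (by norm_num : (0:ℝ) ≤ 1/2) (by norm_num : (0:ℝ) ≤ 1/2) (by norm_num)
    rw [smul_add]
    exact hc
  · -- cardinality
    set A : Set (Fin (k + ℓ) → ℤ) :=
      (fun j : Fin k => (Pi.single (Fin.castAdd ℓ j) (a (Fin.castAdd ℓ j) - 1) : Fin (k+ℓ) → ℤ)) '' Set.univ with hA
    set B : Set (Fin (k + ℓ) → ℤ) :=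
      (fun j : Fin k => (Pi.single (Fin.castAdd ℓ j) (b (Fin.castAdd ℓ j) + 1) : Fin (k+ℓ) → ℤ)) '' Set.univ with hB
    set C : Set (Fin (k + ℓ) → ℤ) :=
      (fun j : Fin ℓ => (Pi.single (Fin.natAdd k j) 2 : Fin (k+ℓ) → ℤ)) '' Set.univ with hC
    have haneg : ∀ j : Fin k, a (Fin.castAdd ℓ j) - 1 ≠ 0 := by
      intro j
      have := (ha (Fin.castAdd ℓ j) (by simpa using j.isLt)).1
      omega
    have hbpos : ∀ j : Fin k, b (Fin.castAdd ℓ j) + 1 ≠ 0 := by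
      intro j
      have := (ha (Fin.castAdd ℓ j) (by simpa using j.isLt)).2
      omega
    have hHeq : H = A ∪ B ∪ C := by
      rw [hHdef]
      ext w
      constructor
      · rintro ⟨i, ⟨hk, h1 | h1⟩ | ⟨hk, h1⟩⟩
        · left; left
          refine ⟨⟨i.val, hk⟩, trivial, ?_⟩
          have hcast : Fin.castAdd ℓ (⟨i.val, hk⟩ : Fin k) = i := by
            apply Fin.ext; rfl
          simp only [hcast]; exact h1.symm
        · left; right
          refine ⟨⟨i.val, hk⟩, trivial, ?_⟩
          have hcast : Fin.castAdd ℓ (⟨i.val, hk⟩ : Fin k) = i := by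
            apply Fin.ext; rfl
          simp only [hcast]; exact h1.symm
        · right
          refine ⟨⟨i.val - k, by omega⟩, trivial, ?_⟩
          have hcast : Fin.natAdd k (⟨i.val - k, by omega⟩ : Fin ℓ) = i := by
            apply Fin.ext; simp; omega
          simp only [hcast]; exact h1.symm
      · rintro ((⟨j, -, rfl⟩ | ⟨j, -, rfl⟩) | ⟨j, -, rfl⟩)
        · exact ⟨Fin.castAdd ℓ j, Or.inl ⟨by simpa using j.isLt, Or.inl rfl⟩⟩
        · exact ⟨Fin.castAdd ℓ j, Or.inl ⟨by simpa using j.isLt, Or.inr rfl⟩⟩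
        · exact ⟨Fin.natAdd k j, Or.inr ⟨by simp, rfl⟩⟩
    have hAfin : A.Finite := Set.Finite.image _ Set.finite_univ
    have hBfin : B.Finite := Set.Finite.image _ Set.finite_univ
    have hCfin : C.Finite := Set.Finite.image _ Set.finite_univ
    have hcastinj : Function.Injective (Fin.castAdd (n := k) ℓ) :=
      Fin.castAdd_injective k ℓ
    have hAcard : A.ncard = k := by
      rw [hA, Set.ncard_image_of_injective _ ?_, Set.ncard_univ, Nat.card_eq_fintype_card,
        Fintype.card_fin]
      intro x y h
      obtain ⟨h1, -⟩ := single_eq_single (haneg x) h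
      exact hcastinj h1
    have hBcard : B.ncard = k := by
      rw [hB, Set.ncard_image_of_injective _ ?_, Set.ncard_univ, Nat.card_eq_fintype_card,
        Fintype.card_fin]
      intro x y h
      obtain ⟨h1, -⟩ := single_eq_single (hbpos x) h
      exact hcastinj h1
    have hCcard : C.ncard = ℓ := by
      rw [hC, Set.ncard_image_of_injective _ ?_, Set.ncard_univ, Nat.card_eq_fintype_card,
        Fintype.card_fin]
      intro x y h
      obtain ⟨h1, -⟩ := single_eq_single (by norm_num : (2:ℤ) ≠ 0) h
      apply Fin.ext
      have := congrArg Fin.val h1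
      simpa using this
    have hAB : Disjoint A B := by
      rw [Set.disjoint_left]
      rintro w ⟨j, -, rfl⟩ ⟨j', -, hw⟩
      dsimp only at hw
      obtain ⟨-, h2⟩ := single_eq_single (hbpos j') hw
      have ha1 := (ha (Fin.castAdd ℓ j) (by simpa using j.isLt)).1
      have hb1 := (ha (Fin.castAdd ℓ j') (by simpa using j'.isLt)).2
      omega
    have hABC : Disjoint (A ∪ B) C := by
      rw [Set.disjoint_left]
      rintro w (⟨j, -, rfl⟩ | ⟨j, -, rfl⟩) ⟨j', -, hw⟩ <;> dsimp only at hw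
      · obtain ⟨h1, -⟩ := single_eq_single (by norm_num : (2:ℤ) ≠ 0) hw
        have := congrArg Fin.val h1
        simp at this
        omega
      · obtain ⟨h1, -⟩ := single_eq_single (by norm_num : (2:ℤ) ≠ 0) hw
        have := congrArg Fin.val h1
        simp at this
        omega
    rw [hHeq, Set.ncard_union_eq hABC (hAfin.union hBfin) hCfin,
      Set.ncard_union_eq hAB hAfin hBfin, hAcard, hBcard, hCcard]
    ring
end

section
/- Let ◊_d = {0, ±e_1, ..., ±e_d} ⊆ ℤ^d and suppose P = {x ∈ ℝ^d : Ax ≤ 1} is a relaxation of ◊_d (i.e., P ∩ ℤ^d = ◊_d). Then Q = {(x, y) ∈ ℝ^{d+1} : A(x − y e_1) ≤ 1, −1 ≤ x_1 + y ≤ 1} is a relaxation of ◊_{d+1} = {0, ±e_1, ..., ±e_{d+1}} ⊆ ℤ^{d+1}. -/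
/-- The discrete standard crosspolytope `{0, ±e₁, …, ±e_n}` in `ℤⁿ`. -/
def cross (n : ℕ) : Set (Fin n → ℤ) :=
  {z | z = 0 ∨ ∃ i, z = Pi.single i 1 ∨ z = Pi.single i (-1)}

lemma cross_abs {n : ℕ} {x : Fin n → ℤ} (hx : x ∈ cross n) (j : Fin n) : |x j| ≤ 1 := by
  rcases hx with h | ⟨i, h | h⟩ <;> subst h <;>
    simp [Pi.single_apply] <;> split <;> simp

/-- if `{x : Ax ≤ 1}` is a relaxation of `◊_d`, then
`{(x,y) : A(x − y e₁) ≤ 1, −1 ≤ x₁ + y ≤ 1}` is a relaxation of `◊_{d+1}`. -/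
theorem cross_lift_relaxation (d m : ℕ) (hd : 0 < d) (A : Fin m → Fin d → ℝ)
    (hrel : ∀ z : Fin d → ℤ, (∀ i, ∑ j, A i j * (z j : ℝ) ≤ 1) ↔ z ∈ cross d) :
    ∀ (x : Fin d → ℤ) (y : ℤ),
      ((∀ i, (∑ j, A i j * (x j : ℝ)) - (y : ℝ) * A i ⟨0, hd⟩ ≤ 1) ∧
        |(x ⟨0, hd⟩ : ℝ) + (y : ℝ)| ≤ 1)
      ↔ ((x ∈ cross d ∧ y = 0) ∨ (x = 0 ∧ (y = 1 ∨ y = -1))) := by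
  intro x y
  set i0 : Fin d := ⟨0, hd⟩ with hi0
  set z : Fin d → ℤ := fun j => x j - if j = i0 then y else 0 with hz
  have hxz : ∀ j, x j = z j + if j = i0 then y else 0 := by
    intro j; simp [hz]
  have hsum : ∀ i, ∑ j, A i j * (z j : ℝ)
      = (∑ j, A i j * (x j : ℝ)) - (y : ℝ) * A i i0 := by
    intro i
    have h1 : ∀ j ∈ Finset.univ, A i j * (z j : ℝ)
        = A i j * (x j : ℝ) - (if j = i0 then (y : ℝ) * A i i0 else 0) := by
      intro j _
      simp only [hz]
      push_cast
      by_cases h : j = i0 <;> simp [h] <;> ring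
    rw [Finset.sum_congr rfl h1, Finset.sum_sub_distrib,
      Finset.sum_ite_eq' Finset.univ i0]
    simp
  have habs : (|(x i0 : ℝ) + (y : ℝ)| ≤ 1) ↔ |x i0 + y| ≤ 1 := by
    rw [show ((x i0 : ℝ) + (y : ℝ)) = ((x i0 + y : ℤ) : ℝ) by push_cast; ring,
      ← Int.cast_abs]
    exact_mod_cast Iff.rfl
  have hfirst : (∀ i, (∑ j, A i j * (x j : ℝ)) - (y : ℝ) * A i i0 ≤ 1) ↔ z ∈ cross d := by
    rw [← hrel z]
    constructor <;> intro h i <;> [rw [hsum]; rw [← hsum]] <;> exact h i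
  rw [hfirst, habs]
  constructor
  · rintro ⟨hc, hb⟩
    have hb' : -1 ≤ x i0 + y ∧ x i0 + y ≤ 1 := abs_le.mp hb
    rcases hc with h0 | ⟨i, h1 | h1⟩
    · -- z = 0
      have hzi0 : z i0 = 0 := by rw [h0]; rfl
      have hx0 : x i0 = y := by have := hxz i0; simp [hzi0] at this; omega
      have hy : y = 0 := by omega
      refine Or.inl ⟨Or.inl ?_, hy⟩
      funext j
      have hzj : z j = 0 := by rw [h0]; rfl
      have hxj := hxz j
      simp only [hy, ite_self, add_zero, Pi.zero_apply] at hxj ⊢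
      omega
    · -- z = Pi.single i 1
      by_cases hii : i = i0
      · subst hii
        have hzi0 : z i0 = 1 := by rw [h1]; simp
        have hx0 : x i0 = 1 + y := by have := hxz i0; simp [hzi0] at this; omega
        have hy : y = 0 ∨ y = -1 := by omega
        rcases hy with hy | hy
        · refine Or.inl ⟨Or.inr ⟨i0, Or.inl ?_⟩, hy⟩
          funext j
          have hzj := congrFun h1 j
          have hxj := hxz j
          by_cases hj : j = i0 <;>
            simp only [hj, hy, Pi.single_apply, if_true, if_false, ite_true, ite_false,
              if_pos rfl, add_zero] at hzj hxj ⊢ <;>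
            simp_all [Pi.single_apply] <;> omega
        · refine Or.inr ⟨?_, Or.inr hy⟩
          funext j
          have hzj := congrFun h1 j
          have hxj := hxz j
          by_cases hj : j = i0 <;>
            simp only [hj, hy, Pi.single_apply, Pi.zero_apply, if_pos rfl,
              add_zero] at hzj hxj ⊢ <;>
            simp_all [Pi.single_apply] <;> omega
      · have hzi0 : z i0 = 0 := by rw [h1]; simp [Pi.single_apply, Ne.symm hii]
        have hx0 : x i0 = y := by have := hxz i0; simp [hzi0] at this; omega
        have hy : y = 0 := by omega
        refine Or.inl ⟨Or.inr ⟨i, Or.inl ?_⟩, hy⟩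
        funext j
        have hzj := congrFun h1 j
        have hxj := hxz j
        by_cases hj : j = i0 <;>
          simp only [hj, hy, Pi.single_apply, if_pos rfl, add_zero,
            ite_self] at hzj hxj ⊢ <;>
          simp_all [Pi.single_apply] <;> omega
    · -- z = Pi.single i (-1)
      by_cases hii : i = i0
      · subst hii
        have hzi0 : z i0 = -1 := by rw [h1]; simp
        have hx0 : x i0 = -1 + y := by have := hxz i0; simp [hzi0] at this; omega
        have hy : y = 0 ∨ y = 1 := by omega
        rcases hy with hy | hy
        · refine Or.inl ⟨Or.inr ⟨i0, Or.inr ?_⟩, hy⟩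
          funext j
          have hzj := congrFun h1 j
          have hxj := hxz j
          by_cases hj : j = i0 <;>
            simp only [hj, hy, Pi.single_apply, if_true, if_false, ite_true, ite_false,
              if_pos rfl, add_zero] at hzj hxj ⊢ <;>
            simp_all [Pi.single_apply] <;> omega
        · refine Or.inr ⟨?_, Or.inl hy⟩
          funext j
          have hzj := congrFun h1 j
          have hxj := hxz j
          by_cases hj : j = i0 <;>
            simp only [hj, hy, Pi.single_apply, Pi.zero_apply, if_pos rfl,
              add_zero] at hzj hxj ⊢ <;>
            simp_all [Pi.single_apply] <;> omega
      · have hzi0 : z i0 = 0 := by rw [h1]; simp [Pi.single_apply, Ne.symm hii]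
        have hx0 : x i0 = y := by have := hxz i0; simp [hzi0] at this; omega
        have hy : y = 0 := by omega
        refine Or.inl ⟨Or.inr ⟨i, Or.inr ?_⟩, hy⟩
        funext j
        have hzj := congrFun h1 j
        have hxj := hxz j
        by_cases hj : j = i0 <;>
          simp only [hj, hy, Pi.single_apply, if_pos rfl, add_zero,
            ite_self] at hzj hxj ⊢ <;>
          simp_all [Pi.single_apply] <;> omega
  · rintro (⟨hc, hy⟩ | ⟨hx, hy⟩)
    · subst hy
      have hzx : z = x := by funext j; simp [hz]
      refine ⟨hzx ▸ hc, ?_⟩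
      simpa using cross_abs hc i0
    · subst hx
      rcases hy with hy | hy <;> subst hy
      · refine ⟨Or.inr ⟨i0, Or.inr ?_⟩, by simp⟩
        funext j
        by_cases hj : j = i0 <;> simp [hz, hj, Pi.single_apply]
      · refine ⟨Or.inr ⟨i0, Or.inl ?_⟩, by simp⟩
        funext j
        by_cases hj : j = i0 <;> simp [hz, hj, Pi.single_apply]
end

section
/- Let K ⊆ ℝ^d be a convex body that is centrally symmetric about an integer point. Then vol(K) ≤ 2^d · |K ∩ ℤ^d|. -/
/-!
Counting form of Blichfeldt's principle: if every coset `x + L` meets `s` in at most `n` points,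
then `μ s ≤ n · μ F` for a fundamental domain `F` of `L`, since `μ s` is the integral over `F` of
the number of lattice translates of `x` lying in `s`. Now if `x + g ∈ K / 2` for all `g` in a
set `T ⊆ L`, fix `g₀ ∈ T`: each `c + g - g₀` is the midpoint of `2 (x + g)` and of the reflection
of `2 (x + g₀)` through `c`, so `g ↦ c + g - g₀` injects `T` into `L ∩ K`. Hence
`vol K = 2 ^ d vol (K / 2) ≤ 2 ^ d |L ∩ K|` for the unit-covolume lattice `ℤ^d`.
-/

open MeasureTheory Set Module
open scoped Pointwise ENNReal

namespace MeasureTheory.IsAddFundamentalDomain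

variable {E L : Type*} [MeasurableSpace E] {μ : Measure E} {F : Set E}
  [AddGroup L] [Countable L] [AddAction L E] [MeasurableSpace L] [MeasurableVAdd L E]
  [VAddInvariantMeasure L E μ]

theorem measure_le_mul_of_encard_le (fund : IsAddFundamentalDomain L F μ) {s : Set E}
    (hs : MeasurableSet s) {n : ℕ∞} (h : ∀ x, {g : L | g +ᵥ x ∈ s}.encard ≤ n) :
    μ s ≤ n * μ F := by
  have hcount : ∀ x, ∑' g : L, s.indicator 1 (g +ᵥ x) = ({g : L | g +ᵥ x ∈ s}.encard : ℝ≥0∞) :=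
    fun x => by
      rw [← ENNReal.tsum_set_one, tsum_subtype {g : L | g +ᵥ x ∈ s} fun _ => 1]
      rfl
  calc μ s = ∫⁻ x, s.indicator 1 x ∂μ := (lintegral_indicator_one hs).symm
    _ = ∑' g : L, ∫⁻ x in F, s.indicator 1 (g +ᵥ x) ∂μ := fund.lintegral_eq_tsum'' _
    _ = ∫⁻ x in F, ∑' g : L, s.indicator 1 (g +ᵥ x) ∂μ :=
      (lintegral_tsum fun g => ((measurable_one.indicator hs).comp
        (measurable_const_vadd g)).aemeasurable).symm
    _ ≤ ∫⁻ _ in F, (n : ℝ≥0∞) ∂μ :=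
      lintegral_mono fun x => (hcount x).trans_le (by exact_mod_cast h x)
    _ = n * μ F := setLIntegral_const _ _

end MeasureTheory.IsAddFundamentalDomain

theorem Convex.encard_vadd_mem_inv_two_smul_le {E : Type*} [AddCommGroup E] [Module ℝ E]
    {K : Set E} (hconv : Convex ℝ K) {L : AddSubgroup E} {c : E} (hc : c ∈ L)
    (hsym : ∀ y ∈ K, (2 : ℝ) • c - y ∈ K) (x : E) :
    {g : L | g +ᵥ x ∈ (2⁻¹ : ℝ) • K}.encard ≤ (↑L ∩ K).encard := by
  rcases eq_empty_or_nonempty {g : L | g +ᵥ x ∈ (2⁻¹ : ℝ) • K} with hempty | ⟨g₀, hg₀⟩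
  · simp [hempty]
  have hdouble : ∀ g : L, g +ᵥ x ∈ (2⁻¹ : ℝ) • K → (2 : ℝ) • ((g : E) + x) ∈ K := fun g hg => by
    rwa [mem_inv_smul_set_iff₀ two_ne_zero] at hg
  refine Set.encard_le_encard_of_injOn (f := fun g : L => c + g - g₀) (fun g hg => ⟨?_, ?_⟩)
    (fun a _ b _ hab => Subtype.ext (by simpa using hab))
  · exact L.sub_mem (L.add_mem hc g.2) g₀.2
  · convert hconv (hdouble g hg) (hsym _ (hdouble g₀ hg₀)) (a := 2⁻¹) (b := 2⁻¹)
      (by norm_num) (by norm_num) (by norm_num) using 1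
    module

theorem MeasureTheory.IsAddFundamentalDomain.measure_le_two_pow_mul_encard_inter_mul
    {E : Type*} [NormedAddCommGroup E] [NormedSpace ℝ E] [MeasurableSpace E] [BorelSpace E]
    [FiniteDimensional ℝ E] {μ : Measure E} [μ.IsAddHaarMeasure] {L : AddSubgroup E}
    [Countable L] {F K : Set E} (fund : IsAddFundamentalDomain L F μ) (hK : MeasurableSet K)
    (hconv : Convex ℝ K) {c : E} (hc : c ∈ L) (hsym : ∀ y ∈ K, (2 : ℝ) • c - y ∈ K) :
    μ K ≤ 2 ^ finrank ℝ E * (↑L ∩ K).encard * μ F := by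
  have hhalf : μ K = 2 ^ finrank ℝ E * μ ((2⁻¹ : ℝ) • K) := by
    conv_lhs => rw [← smul_inv_smul₀ (two_ne_zero' ℝ) K]
    rw [Measure.addHaar_smul_of_nonneg μ zero_le_two, ENNReal.ofReal_pow zero_le_two,
      ENNReal.ofReal_ofNat]
  rw [hhalf, mul_assoc]
  gcongr
  exact fund.measure_le_mul_of_encard_le (hK.const_smul₀ _)
    (hconv.encard_vadd_mem_inv_two_smul_le hc hsym)

theorem toR_injective {d : ℕ} : Function.Injective (toR (d := d)) :=
  fun _ _ h => funext fun i => Int.cast_injective (congrFun h i)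

theorem coe_span_int_basisFun_eq_range_toR {d : ℕ} :
    (Submodule.span ℤ (range (Pi.basisFun ℝ (Fin d))) : Set (Fin d → ℝ)) = range toR := by
  ext x
  simp [Basis.mem_span_iff_repr_mem, toR, funext_iff, Classical.skolem]

theorem ncard_toR_preimage_eq_encard_range_inter {d : ℕ} {K : Set (Fin d → ℝ)} (hK : Bornology.IsBounded K) :
    ({z : Fin d → ℤ | toR z ∈ K}.ncard : ℕ∞) = (range toR ∩ K).encard := by
  have himage : toR '' {z | toR z ∈ K} = range toR ∩ K := image_preimage_eq_range_inter
  have hfin : (range toR ∩ K).Finite := by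
    rw [← coe_span_int_basisFun_eq_range_toR, inter_comm]
    exact ZSpan.setFinite_inter _ hK
  rw [← himage, toR_injective.encard_image,
    (Finite.of_finite_image (himage ▸ hfin) toR_injective.injOn).cast_ncard_eq]

theorem van_der_corput_general (d : ℕ) (K : Set (Fin d → ℝ)) (hK : IsCompact K)
    (hconv : Convex ℝ K) (v : Fin d → ℤ)
    (hsym : ∀ x : Fin d → ℝ, x ∈ K ↔ (2 : ℝ) • toR v - x ∈ K) :
    MeasureTheory.volume K ≤
      2 ^ d * ({z : Fin d → ℤ | toR z ∈ K}.ncard : ENNReal) := by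
  let Λ := (Submodule.span ℤ (range (Pi.basisFun ℝ (Fin d)))).toAddSubgroup
  have : Countable Λ := inferInstanceAs (Countable (Submodule.span ℤ _))
  have hΛ : (Λ : Set (Fin d → ℝ)) = range toR := coe_span_int_basisFun_eq_range_toR
  have hvol : volume (ZSpan.fundamentalDomain (Pi.basisFun ℝ (Fin d))) = 1 := by
    rw [ZSpan.fundamentalDomain_pi_basisFun, Real.volume_pi_Ico]
    simp
  have hv : toR v ∈ Λ := show toR v ∈ (Λ : Set _) from hΛ ▸ mem_range_self v
  have hbound := (ZSpan.isAddFundamentalDomain' (Pi.basisFun ℝ (Fin d)) volume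
    ).measure_le_two_pow_mul_encard_inter_mul hK.measurableSet hconv hv fun y => (hsym y).1
  rw [hvol, mul_one, finrank_fin_fun, hΛ,
    ← ncard_toR_preimage_eq_encard_range_inter hK.isBounded] at hbound
  exact_mod_cast hbound

/-- van der Corput's theorem. A convex body `K ⊆ ℝ^d` centrally
symmetric about an integer point satisfies `vol(K) ≤ 2^d · |K ∩ ℤ^d|`. -/
theorem van_der_corput (d : ℕ) (K : Set (Fin d → ℝ)) (hK : IsCompact K)
    (hconv : Convex ℝ K) (hint : (interior K).Nonempty) (v : Fin d → ℤ)
    (hsym : ∀ x : Fin d → ℝ, x ∈ K ↔ (2 : ℝ) • toR v - x ∈ K) :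
    MeasureTheory.volume K ≤
      2 ^ d * ({z : Fin d → ℤ | toR z ∈ K}.ncard : ENNReal) :=
  van_der_corput_general d K hK hconv v hsym
end

section
/- Let X ⊆ ℤ^d be a lattice-convex set, H a hiding set for X, and suppose h ∈ H is not an observer of X. Then for every observer y ∈ obs(X) with y ∈ conv({h} ∪ X), the set (H \ {h}) ∪ {y} is again a hiding set for X of the same cardinality as H. -/
/-- The set of observers of `X ⊆ ℤ^d`. -/
def Obs {d : ℕ} (X : Set (Fin d → ℤ)) : Set (Fin d → ℤ) :=
  {z | z ∉ X ∧ ∀ w : Fin d → ℤ,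
    toR w ∈ convexHull ℝ (toR '' insert z X) → w ∈ insert z X}

/-- `S` is a hiding set for the lattice-convex set `X`. -/
def HidingSet {d : ℕ} (X S : Set (Fin d → ℤ)) : Prop :=
  (∀ z ∈ S, z ∉ X ∧ toR z ∈ (affineSpan ℝ (toR '' X) : Set (Fin d → ℝ))) ∧
  ∀ x ∈ S, ∀ y ∈ S, x ≠ y →
    (convexHull ℝ {toR x, toR y} ∩ convexHull ℝ (toR '' X)).Nonempty

section Segment

variable {𝕜 V : Type*} [Field 𝕜] [LinearOrder 𝕜] [IsStrictOrderedRing 𝕜]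
  [AddCommGroup V] [Module 𝕜 V]

/-- Pasch's axiom. -/
theorem segment_inter_segment_nonempty_of_mem_segment {x h q p y : V}
    (hp : p ∈ segment 𝕜 x h) (hy : y ∈ segment 𝕜 h q) :
    (segment 𝕜 x y ∩ segment 𝕜 p q).Nonempty := by
  obtain ⟨u, s, hu, hs, hus, rfl⟩ := hp
  obtain ⟨a, b, ha, hb, hab, rfl⟩ := hy
  rcases hs.eq_or_lt with rfl | hs
  · obtain rfl : u = 1 := by simpa using hus
    exact ⟨x, left_mem_segment 𝕜 _ _, by simpa using left_mem_segment 𝕜 x q⟩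
  set D := a * u + s
  have hD : 0 < D := by positivity
  refine ⟨(a * u / D) • x + (s / D) • (a • h + b • q),
    ⟨_, _, by positivity, by positivity, by rw [← add_div, div_self hD.ne'], rfl⟩,
    ⟨a / D, s * b / D, by positivity, by positivity, ?_, ?_⟩⟩
  · rw [← add_div, div_eq_one_iff_eq hD.ne']
    linear_combination (-a) * hus + s * hab
  · match_scalars <;> ring

theorem Convex.segment_inter_nonempty_of_mem_segment {C : Set V} (hC : Convex 𝕜 C)
    {x h q y : V} (hq : q ∈ C) (hy : y ∈ segment 𝕜 h q) (hxh : (segment 𝕜 x h ∩ C).Nonempty) :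
    (segment 𝕜 x y ∩ C).Nonempty := by
  obtain ⟨p, hp, hpC⟩ := hxh
  obtain ⟨z, hzxy, hzpq⟩ := segment_inter_segment_nonempty_of_mem_segment hp hy
  exact ⟨z, hzxy, hC.segment_subset hpC hq hzpq⟩

theorem Convex.mem_of_mem_segment_of_segment_inter_nonempty {C : Set V} (hC : Convex 𝕜 C)
    {h q y : V} (hq : q ∈ C) (hy : y ∈ segment 𝕜 h q) (hyh : (segment 𝕜 y h ∩ C).Nonempty) :
    y ∈ C := by
  obtain ⟨p, hp, hpC⟩ := hyh
  exact hC.mem_of_wbtw ((mem_segment_iff_wbtw.1 hy).trans_left_right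
    (mem_segment_iff_wbtw.1 hp).symm) hpC hq

theorem exists_mem_segment_of_mem_convexHull_insert {s : Set V} (hs : s.Nonempty) {x y : V}
    (hy : y ∈ convexHull 𝕜 (insert x s)) : ∃ q ∈ convexHull 𝕜 s, y ∈ segment 𝕜 x q := by
  simpa [convexHull_insert hs, convexJoin_singleton_left] using hy

end Segment

section HidingSet

variable {d : ℕ} {X H : Set (Fin d → ℤ)}

theorem HidingSet.image_nonempty (hH : HidingSet X H) {h : Fin d → ℤ} (hhH : h ∈ H) :
    (toR '' X).Nonempty :=
  (affineSpan_nonempty ℝ).1 ⟨_, (hH.1 h hhH).2⟩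

theorem HidingSet.segment_inter_nonempty (hH : HidingSet X H) {x y : Fin d → ℤ}
    (hx : x ∈ H) (hy : y ∈ H) (hxy : x ≠ y) :
    (segment ℝ (toR x) (toR y) ∩ convexHull ℝ (toR '' X)).Nonempty := by
  simpa only [convexHull_pair] using hH.2 x hx y hy hxy

theorem HidingSet.insert_diff_singleton (hH : HidingSet X H) {h y : Fin d → ℤ} (hyX : y ∉ X)
    (hyaff : toR y ∈ (affineSpan ℝ (toR '' X) : Set (Fin d → ℝ)))
    (hseg : ∀ x ∈ H, x ≠ h → (segment ℝ (toR x) (toR y) ∩ convexHull ℝ (toR '' X)).Nonempty) :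
    HidingSet X (insert y (H \ {h})) := by
  refine ⟨?_, ?_⟩
  · rintro z (rfl | ⟨hzH, -⟩)
    exacts [⟨hyX, hyaff⟩, hH.1 z hzH]
  · simp_rw [convexHull_pair]
    rintro x₁ (rfl | ⟨hx₁H, hx₁h⟩) x₂ (rfl | ⟨hx₂H, hx₂h⟩) hne
    · exact absurd rfl hne
    · rw [segment_symm]
      exact hseg x₂ hx₂H hx₂h
    · exact hseg x₁ hx₁H hx₁h
    · exact hH.segment_inter_nonempty hx₁H hx₂H hne

end HidingSet

theorem hiding_set_swap_observer_general (d : ℕ) (X : Set (Fin d → ℤ))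
    (hX : ∀ z : Fin d → ℤ, toR z ∈ convexHull ℝ (toR '' X) ↔ z ∈ X)
    (H : Set (Fin d → ℤ)) (hH : HidingSet X H)
    (h : Fin d → ℤ) (hhH : h ∈ H)
    (y : Fin d → ℤ) (hy : y ∈ Obs X)
    (hyconv : toR y ∈ convexHull ℝ (toR '' insert h X)) :
    HidingSet X (insert y (H \ {h})) ∧ (insert y (H \ {h})).ncard = H.ncard := by
  have hC : Convex ℝ (convexHull ℝ (toR '' X)) := convex_convexHull ℝ _
  rw [Set.image_insert_eq] at hyconv
  obtain ⟨q, hqC, hyhq⟩ :=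
    exists_mem_segment_of_mem_convexHull_insert (hH.image_nonempty hhH) hyconv
  have hyH : y ∉ H \ {h} := fun ⟨hyH, hyh⟩ => hy.1 <| (hX y).1 <|
    hC.mem_of_mem_segment_of_segment_inter_nonempty hqC hyhq
      (hH.segment_inter_nonempty hyH hhH hyh)
  have hyaff : toR y ∈ (affineSpan ℝ (toR '' X) : Set (Fin d → ℝ)) :=
    convexHull_min (Set.insert_subset (hH.1 h hhH).2 (subset_affineSpan ℝ _))
      (affineSpan ℝ _).convex hyconv
  refine ⟨hH.insert_diff_singleton hy.1 hyaff fun x hxH hxh =>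
    hC.segment_inter_nonempty_of_mem_segment hqC hyhq (hH.segment_inter_nonempty hxH hhH hxh), ?_⟩
  rw [Set.ncard_def, Set.ncard_def, Set.encard_insert_of_notMem hyH,
    Set.encard_sdiff_singleton_add_one hhH]

/-- replacing a non-observer `h` of a hiding set `H` by an observer
`y ∈ conv({h} ∪ X)` yields a hiding set of the same cardinality. -/
theorem hiding_set_swap_observer (d : ℕ) (X : Set (Fin d → ℤ))
    (hX : ∀ z : Fin d → ℤ, toR z ∈ convexHull ℝ (toR '' X) ↔ z ∈ X)
    (H : Set (Fin d → ℤ)) (hH : HidingSet X H)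
    (h : Fin d → ℤ) (hhH : h ∈ H) (hhobs : h ∉ Obs X)
    (y : Fin d → ℤ) (hy : y ∈ Obs X)
    (hyconv : toR y ∈ convexHull ℝ (toR '' insert h X)) :
    HidingSet X (insert y (H \ {h})) ∧ (insert y (H \ {h})).ncard = H.ncard :=
  hiding_set_swap_observer_general d X hX H hH h hhH y hy hyconv
end

section
/- For every positive integer d, rc(Δ_d, Z) ≤ ⌈d/2⌉ + 2 where Z = ℤ^k × {−N,...,N}^{k−2} for k = d/2 + 1 (d even) and any N; consequently rc_flat(Δ_d) := max_t rc(Δ_d, [−t,t]^d ∩ ℤ^d) ≤ ⌈d/2⌉ + 2. In particular, for d ≥ 4 there is no finite set Y ⊆ ℤ^d \ Δ_d certifying that every relaxation of Δ_d needs d + 1 inequalities. -/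
section RCFlatAuxSection
namespace RCFlatAux
open Finset

/-! Integer coefficient system witnessing `rc(Δ_d, [-t,t]^d) ≤ ⌈d/2⌉ + 2`. -/

def Arow (d t : ℕ) (i j : ℕ) : ℤ :=
  if i = 0 then
    if j % 2 = 0 then (d * t + 2 : ℤ)
    else (d * t + 2 : ℤ) + (if j / 2 + 2 = (d + 1) / 2 then -1 else 1)
  else if i = 1 then
    if j % 2 = 0 then (2 * (t : ℤ) + 2) ^ ((d + 1) / 2 - 1)
    else -(4 * (t : ℤ) + 4) * (2 * (t : ℤ) + 2) ^ ((d + 1) / 2 - 1)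
      + (if j / 2 + 2 ≤ (d + 1) / 2 then (2 * (t : ℤ) + 2) ^ (j / 2 + 1) else -1)
  else
    if j % 2 = 0 then (if j / 2 = i - 2 then -(2 * (t : ℤ) + 2) ^ (i - 2 + 2) else 0)
    else (if j / 2 ≤ i - 2 then -(2 * (t : ℤ) + 2) ^ (j / 2 + 1) else 0)

def Brhs (d t : ℕ) (i : ℕ) : ℤ :=
  if i = 0 then (d * t + 2 : ℤ) + 1
  else if i = 1 then (2 * (t : ℤ) + 2) ^ ((d + 1) / 2 - 1)
  else 0

/-! ### generic summation helpers -/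

lemma sum_range_pairs (n : ℕ) (F : ℕ → ℤ) :
    ∑ j ∈ range (2 * n), F j = ∑ p ∈ range n, (F (2 * p) + F (2 * p + 1)) := by
  induction n with
  | zero => simp
  | succ k ih =>
      have h2 : 2 * (k + 1) = (2 * k + 1) + 1 := by ring
      rw [h2, sum_range_succ, sum_range_succ, ih, sum_range_succ]
      ring

lemma sum_fin_pairs (d : ℕ) (G : Fin d → ℤ) :
    ∑ j, G j = ∑ p ∈ range ((d + 1) / 2),
      ((if h : 2 * p < d then G ⟨2 * p, h⟩ else 0)
        + (if h : 2 * p + 1 < d then G ⟨2 * p + 1, h⟩ else 0)) := by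
  set m := (d + 1) / 2 with hm
  set F : ℕ → ℤ := fun j => if h : j < d then G ⟨j, h⟩ else 0 with hF
  have h1 : ∑ j, G j = ∑ j ∈ range d, F j := by
    rw [← Fin.sum_univ_eq_sum_range (fun j => F j) d]
    apply Finset.sum_congr rfl
    intro j _
    simp only [hF]
    rw [dif_pos j.2]
  have h2 : ∑ j ∈ range d, F j = ∑ j ∈ range (2 * m), F j := by
    apply Finset.sum_subset
    · apply range_subset_range.mpr; omega
    · intro x _ hx
      simp only [mem_range, not_lt] at hx
      have : ¬ x < d := by omega
      simp only [hF, dif_neg this]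
  rw [h1, h2, sum_range_pairs]

lemma geo' (t : ℤ) (ht : 0 ≤ t) (r : ℕ) :
    2 * t * (∑ q ∈ range r, (2 * t + 2) ^ (q + 1)) + (2 * t + 2)
      ≤ (2 * t + 2) ^ (r + 1) := by
  induction r with
  | zero => simp
  | succ k ih =>
      rw [sum_range_succ]
      have hpow : (0 : ℤ) ≤ (2 * t + 2) ^ (k + 1) := by positivity
      have hsum : (0 : ℤ) ≤ ∑ q ∈ range k, (2 * t + 2) ^ (q + 1) :=
        Finset.sum_nonneg fun q _ => by positivity
      have hstep : (2 * t + 2) ^ (k + 1 + 1) = (2 * t + 2) * (2 * t + 2) ^ (k + 1) := by ring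
      rw [hstep]
      nlinarith [ih, hpow, hsum]

lemma lexbound (t : ℤ) (ht : 0 ≤ t) (b : ℕ → ℤ) (hb : ∀ p, -t ≤ b p ∧ b p ≤ t) (r : ℕ) :
    |2 * ∑ q ∈ range r, (2 * t + 2) ^ (q + 1) * b q| ≤ (2 * t + 2) ^ (r + 1) - (2 * t + 2) := by
  have h1 : |∑ q ∈ range r, (2 * t + 2) ^ (q + 1) * b q|
      ≤ ∑ q ∈ range r, (2 * t + 2) ^ (q + 1) * t := by
    refine (Finset.abs_sum_le_sum_abs _ _).trans (Finset.sum_le_sum fun q _ => ?_)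
    rw [abs_mul, abs_pow, abs_of_nonneg (by linarith : (0:ℤ) ≤ 2 * t + 2)]
    exact mul_le_mul_of_nonneg_left (abs_le.mpr (hb q)) (by positivity)
  have h2 : ∑ q ∈ range r, (2 * t + 2) ^ (q + 1) * t
      = t * ∑ q ∈ range r, (2 * t + 2) ^ (q + 1) := by
    rw [← Finset.sum_mul, mul_comm]
  have h3 := geo' t ht r
  rw [abs_mul]
  have h4 : |(2:ℤ)| = 2 := by norm_num
  calc |(2:ℤ)| * |∑ q ∈ range r, (2 * t + 2) ^ (q + 1) * b q|
      ≤ 2 * (t * ∑ q ∈ range r, (2 * t + 2) ^ (q + 1)) := by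
        rw [h4]; exact mul_le_mul_of_nonneg_left (h1.trans_eq h2) (by norm_num)
    _ ≤ (2 * t + 2) ^ (r + 1) - (2 * t + 2) := by linarith

/-! ### the arithmetic core -/

set_option maxHeartbeats 1000000 in
lemma core (m : ℕ) (hm : 1 ≤ m) (t : ℤ) (ht : 0 ≤ t)
    (a b : ℕ → ℤ)
    (ha : ∀ p, -t ≤ a p ∧ a p ≤ t) (hb : ∀ p, -t ≤ b p ∧ b p ≤ t)
    (M : ℤ) (hM : (m : ℤ) * t + 2 ≤ M)
    (hS : M * (∑ p ∈ range m, a p) + M * (∑ p ∈ range m, b p)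
        + (∑ p ∈ range m, (if p + 2 = m then (-1 : ℤ) else 1) * b p) ≤ M + 1)
    (hC0 : (2*t+2) ^ (m-1) * (∑ p ∈ range m, a p)
        - (4*t+4) * (2*t+2) ^ (m-1) * (∑ p ∈ range m, b p)
        + (∑ p ∈ range m, (if p + 2 ≤ m then (2*t+2 : ℤ) ^ (p+1) else -1) * b p)
        ≤ (2*t+2) ^ (m-1))
    (hCr : ∀ r, r < m →
        0 ≤ (2*t+2 : ℤ) ^ (r+2) * a r + ∑ q ∈ range (r+1), (2*t+2 : ℤ) ^ (q+1) * b q) :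
    (∀ p, p < m → 0 ≤ a p ∧ 0 ≤ b p)
      ∧ (∑ p ∈ range m, a p) + (∑ p ∈ range m, b p) ≤ 1 := by
  obtain ⟨k, rfl⟩ : ∃ k, m = k + 1 := ⟨m - 1, by omega⟩
  simp only [Nat.add_sub_cancel] at hC0
  push_cast at hM
  set V : ℤ := 2 * t + 2 with hVdef
  have hVpos : (0 : ℤ) < V := by simp only [hVdef]; linarith
  have hpowpos : ∀ j : ℕ, (0 : ℤ) < V ^ j := fun j => pow_pos hVpos j
  -- Step A : a p ≥ 0
  have hA : ∀ p, p < k + 1 → 0 ≤ a p := by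
    intro p hp
    by_contra hneg
    push_neg at hneg
    have h1 : a p ≤ -1 := by omega
    have h2 := hCr p hp
    have h3 := (abs_le.mp (lexbound t ht b hb (p + 1))).2
    have h4 : V ^ (p + 2) * a p ≤ V ^ (p + 2) * (-1) :=
      mul_le_mul_of_nonneg_left h1 (hpowpos (p + 2)).le
    have h5 : p + 1 + 1 = p + 2 := by omega
    rw [h5] at h3
    linarith [hpowpos (p + 2)]
  -- Step B : b p < 0 forces a p ≥ 1
  have hAB : ∀ p, p < k + 1 → b p ≤ -1 → 1 ≤ a p := by
    intro p hp hbp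
    by_contra hcon
    push_neg at hcon
    have hap : a p = 0 := by have := hA p hp; omega
    have h2 := hCr p hp
    rw [sum_range_succ, hap, mul_zero] at h2
    have h3 := (abs_le.mp (lexbound t ht b hb p)).2
    have h4 : V ^ (p + 1) * b p ≤ V ^ (p + 1) * (-1) :=
      mul_le_mul_of_nonneg_left hbp (hpowpos (p + 1)).le
    linarith [hpowpos (p + 1)]
  -- abbreviations
  set sa := ∑ p ∈ range (k+1), a p with hsadef
  set sb := ∑ p ∈ range (k+1), b p with hsbdef
  have hM0 : (0:ℤ) ≤ M := by
    have h0 : (0:ℤ) ≤ ((k:ℤ)+1) * t := mul_nonneg (by positivity) ht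
    linarith
  -- bound on the sigma sum
  have hSsig : |∑ p ∈ range (k+1), (if p + 2 = k + 1 then (-1 : ℤ) else 1) * b p|
      ≤ ((k:ℤ)+1) * t := by
    refine (Finset.abs_sum_le_sum_abs _ _).trans ?_
    have hterm : ∀ p ∈ range (k+1), |(if p + 2 = k + 1 then (-1 : ℤ) else 1) * b p| ≤ t := by
      intro p _
      by_cases hc : p + 2 = k + 1 <;> simp [hc, abs_le.mpr (hb p)]
    calc ∑ p ∈ range (k+1), |(if p + 2 = k + 1 then (-1 : ℤ) else 1) * b p|
        ≤ ∑ _p ∈ range (k+1), t := Finset.sum_le_sum hterm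
      _ = ((k:ℤ)+1) * t := by
          rw [Finset.sum_const, Finset.card_range]
          push_cast
          ring
  -- Step C : sa + sb ≤ 1
  have hsum1 : sa + sb ≤ 1 := by
    by_contra hcon
    push_neg at hcon
    have h2 : 2 ≤ sa + sb := hcon
    have h3 : M * 2 ≤ M * (sa + sb) := mul_le_mul_of_nonneg_left h2 hM0
    have h4 : M * (sa + sb) = M * sa + M * sb := by ring
    have h5 := (abs_le.mp hSsig).1
    linarith
  -- split the G-sum
  have hSGsplit : (∑ p ∈ range (k+1), (if p + 2 ≤ k + 1 then (V : ℤ) ^ (p+1) else -1) * b p)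
      = (∑ p ∈ range k, V ^ (p+1) * b p) + (-1) * b k := by
    rw [sum_range_succ]
    congr 1
    · apply Finset.sum_congr rfl
      intro p hp
      rw [if_pos (by simp at hp; omega)]
    · rw [if_neg (by omega)]
  rw [hSGsplit] at hC0
  have hWk := hpowpos k
  have hW1 : (1:ℤ) ≤ V ^ k := hWk
  have hGb := (abs_le.mp (lexbound t ht b hb k))
  have hbk := hb k
  have hVk1 : (V:ℤ) ^ (k+1) = V * V ^ k := by ring
  -- Step D1 : sa ≤ 1
  have hSA0 : 0 ≤ sa := Finset.sum_nonneg fun p hp => hA p (mem_range.mp hp)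
  have hsale : sa ≤ 1 := by
    by_contra hcon
    push_neg at hcon
    have h2 : 2 ≤ sa := hcon
    have hsb1 : sb ≤ -1 := by linarith
    have p1 : V ^ k * 2 ≤ V ^ k * sa := mul_le_mul_of_nonneg_left h2 hWk.le
    have p2 : (4*t+4) * V ^ k * sb ≤ (4*t+4) * V ^ k * (-1) := by
      have h0 : (0:ℤ) ≤ (4*t+4) * V ^ k := by positivity
      exact mul_le_mul_of_nonneg_left hsb1 h0
    have htW : (0:ℤ) ≤ t * V ^ k := mul_nonneg ht hWk.le
    rw [hVk1] at hGb
    nlinarith [hGb.1, hbk.1, hbk.2]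
  -- Step D2 : sb ≥ 0
  have hsb0 : 0 ≤ sb := by
    by_contra hcon
    push_neg at hcon
    have hsb1 : sb ≤ -1 := by omega
    have p2 : (4*t+4) * V ^ k * sb ≤ (4*t+4) * V ^ k * (-1) := by
      have h0 : (0:ℤ) ≤ (4*t+4) * V ^ k := by positivity
      exact mul_le_mul_of_nonneg_left hsb1 h0
    have p1 : 0 ≤ V ^ k * sa := mul_nonneg hWk.le hSA0
    have htW : (0:ℤ) ≤ t * V ^ k := mul_nonneg ht hWk.le
    rw [hVk1] at hGb
    nlinarith [hGb.1, hbk.1, hbk.2]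
  refine ⟨?_, hsum1⟩
  intro p hp
  refine ⟨hA p hp, ?_⟩
  -- Step F : no negative b
  by_contra hneg
  push_neg at hneg
  have hbn : b p ≤ -1 := by omega
  have han := hAB p hp hbn
  have hsage : 1 ≤ sa :=
    le_trans han (Finset.single_le_sum (fun q hq => hA q (mem_range.mp hq)) (mem_range.mpr hp))
  have hsa1 : sa = 1 := le_antisymm hsale hsage
  have herase_a : ∑ q ∈ (range (k+1)).erase p, a q + a p = sa :=
    Finset.sum_erase_add _ _ (mem_range.mpr hp)
  have herase_a_nonneg : 0 ≤ ∑ q ∈ (range (k+1)).erase p, a q :=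
    Finset.sum_nonneg fun q hq => hA q (mem_range.mp (Finset.mem_of_mem_erase hq))
  have herase_a0 : ∑ q ∈ (range (k+1)).erase p, a q = 0 := by omega
  have haq : ∀ q ∈ (range (k+1)).erase p, a q = 0 :=
    (Finset.sum_eq_zero_iff_of_nonneg
      (fun q hq => hA q (mem_range.mp (Finset.mem_of_mem_erase hq)))).mp herase_a0
  have hbq : ∀ q, q < k + 1 → q ≠ p → 0 ≤ b q := by
    intro q hq hqp
    by_contra hc
    push_neg at hc
    have h1 : 1 ≤ a q := hAB q hq (by omega)
    have h2 := haq q (mem_erase.mpr ⟨hqp, mem_range.mpr hq⟩)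
    omega
  have hsb00 : sb = 0 := le_antisymm (by linarith) hsb0
  have herase_b : ∑ q ∈ (range (k+1)).erase p, b q + b p = sb :=
    Finset.sum_erase_add _ _ (mem_range.mpr hp)
  rcases (show p + 1 = k + 1 ∨ p + 2 = k + 1 ∨ p + 3 ≤ k + 1 by omega) with hc1 | hc2 | hc3
  · -- case p = k : row C0 gives contradiction
    have hpk : p = k := by omega
    subst hpk
    rw [hsa1, hsb00] at hC0
    have hpos : 0 ≤ ∑ q ∈ range p, V ^ (q+1) * b q :=
      Finset.sum_nonneg fun q hq => mul_nonneg (hpowpos (q+1)).le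
        (hbq q (by simp at hq; omega) (by simp at hq; omega))
    nlinarith [hC0, hpos, hbn, hWk]
  · -- case p + 2 = k + 1 : row S gives contradiction
    have hsplitσ := Finset.sum_erase_add (range (k+1))
      (fun q => (if q + 2 = k + 1 then (-1 : ℤ) else 1) * b q) (mem_range.mpr hp)
    have hσcong : ∑ q ∈ (range (k+1)).erase p, (if q + 2 = k + 1 then (-1 : ℤ) else 1) * b q
        = ∑ q ∈ (range (k+1)).erase p, b q := by
      refine Finset.sum_congr rfl fun q hq => ?_
      have hq' := Finset.mem_erase.mp hq
      rw [if_neg (by omega), one_mul]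
    have hsplitσ' : ∑ q ∈ (range (k+1)).erase p, b q + (-1) * b p
        = ∑ x ∈ range (k+1), (if x + 2 = k + 1 then (-1 : ℤ) else 1) * b x := by
      have := hsplitσ
      simp only [hc2, if_pos] at this
      rw [← hσcong]
      simpa using this
    rw [hsa1] at hS
    rw [hsb00] at hS herase_b
    linarith [hS, hsplitσ', herase_b, hbn]
  · -- case p + 3 ≤ k + 1
    have hp1 : p + 1 < k + 1 := by omega
    have hbp1 : 1 ≤ b (p+1) := by
      by_contra hcc
      push_neg at hcc
      have hb10 : b (p+1) = 0 := le_antisymm (by omega) (hbq (p+1) hp1 (by omega))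
      have ha10 : a (p+1) = 0 := haq (p+1) (mem_erase.mpr ⟨by omega, mem_range.mpr hp1⟩)
      have h2 := hCr (p+1) hp1
      rw [sum_range_succ, sum_range_succ, ha10, hb10, mul_zero, mul_zero] at h2
      have h3 := (abs_le.mp (lexbound t ht b hb p)).2
      have h4 : V ^ (p+1) * b p ≤ V ^ (p+1) * (-1) :=
        mul_le_mul_of_nonneg_left hbn (hpowpos (p+1)).le
      linarith [hpowpos (p+1), hVpos]
    rw [hsa1, hsb00] at hC0
    have hpmem : p ∈ range k := mem_range.mpr (by omega)
    have e1 := Finset.sum_erase_add (range k) (fun q => V ^ (q+1) * b q) hpmem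
    have hp1mem : p + 1 ∈ (range k).erase p :=
      mem_erase.mpr ⟨by omega, mem_range.mpr (by omega)⟩
    have e2 := Finset.sum_erase_add ((range k).erase p) (fun q => V ^ (q+1) * b q) hp1mem
    have hpos2 : 0 ≤ ∑ q ∈ ((range k).erase p).erase (p+1), V ^ (q+1) * b q := by
      refine Finset.sum_nonneg fun q hq => ?_
      have hq1 := Finset.mem_erase.mp hq
      have hq2 := Finset.mem_erase.mp hq1.2
      have hq3 := mem_range.mp hq2.2
      exact mul_nonneg (hpowpos (q+1)).le (hbq q (by omega) hq2.1)
    have hbk0 : 0 ≤ b k := hbq k (by omega) (by omega)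
    have hbkt : b k ≤ t := (hb k).2
    have m1 : V ^ (p+1) * (-t) ≤ V ^ (p+1) * b p :=
      mul_le_mul_of_nonneg_left (hb p).1 (hpowpos (p+1)).le
    have m2 : V ^ (p+1+1) * 1 ≤ V ^ (p+1+1) * b (p+1) :=
      mul_le_mul_of_nonneg_left hbp1 (hpowpos (p+1+1)).le
    have hx : (V:ℤ) ^ (p+1+1) = (2*t+2) * V ^ (p+1) := by rw [hVdef]; ring
    have hW1' : (1:ℤ) ≤ V ^ (p+1) := hpowpos (p+1)
    have ht2 : (0:ℤ) < t + 2 := by linarith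
    have hkey : (t+2) * 1 ≤ (t+2) * V ^ (p+1) := mul_le_mul_of_nonneg_left hW1' ht2.le
    have e1' : (∑ q ∈ (range k).erase p, V ^ (q+1) * b q) + V ^ (p+1) * b p
        = ∑ q ∈ range k, V ^ (q+1) * b q := e1
    have e2' : (∑ q ∈ ((range k).erase p).erase (p+1), V ^ (q+1) * b q)
        + V ^ (p+1+1) * b (p+1) = ∑ q ∈ (range k).erase p, V ^ (q+1) * b q := e2
    have hSle : (∑ q ∈ range k, V ^ (q+1) * b q) ≤ b k := by linarith [hC0]
    have hcomb : V ^ (p+1) * b p + V ^ (p+1+1) * b (p+1)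
        ≤ ∑ q ∈ range k, V ^ (q+1) * b q := by linarith [e1', e2', hpos2]
    linarith [hSle, hcomb, m1, m2, hkey, hbkt, hx]

/-! ### row evaluation -/

lemma ev_even (p : ℕ) : (2 * p) % 2 = 0 ∧ (2 * p) / 2 = p := by omega
lemma ev_odd (p : ℕ) : (2 * p + 1) % 2 = 1 ∧ (2 * p + 1) / 2 = p := by omega

lemma Arow0_even (d t p : ℕ) : Arow d t 0 (2 * p) = (d * t + 2 : ℤ) := by
  simp [Arow, (ev_even p).1]

lemma Arow0_odd (d t p : ℕ) :
    Arow d t 0 (2 * p + 1)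
      = (d * t + 2 : ℤ) + (if p + 2 = (d + 1) / 2 then -1 else 1) := by
  simp [Arow, (ev_odd p).1, (ev_odd p).2]

lemma Arow1_even (d t p : ℕ) :
    Arow d t 1 (2 * p) = (2 * (t : ℤ) + 2) ^ ((d + 1) / 2 - 1) := by
  simp [Arow, (ev_even p).1]

lemma Arow1_odd (d t p : ℕ) :
    Arow d t 1 (2 * p + 1)
      = -(4 * (t : ℤ) + 4) * (2 * (t : ℤ) + 2) ^ ((d + 1) / 2 - 1)
        + (if p + 2 ≤ (d + 1) / 2 then (2 * (t : ℤ) + 2) ^ (p + 1) else -1) := by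
  simp [Arow, (ev_odd p).1, (ev_odd p).2]

lemma Arow2_even (d t r p : ℕ) :
    Arow d t (r + 2) (2 * p)
      = if p = r then -(2 * (t : ℤ) + 2) ^ (r + 2) else 0 := by
  have h2 : r + 2 - 2 = r := by omega
  simp [Arow, (ev_even p).1, (ev_even p).2, h2]

lemma Arow2_odd (d t r p : ℕ) :
    Arow d t (r + 2) (2 * p + 1)
      = if p ≤ r then -(2 * (t : ℤ) + 2) ^ (p + 1) else 0 := by
  have h2 : r + 2 - 2 = r := by omega
  simp [Arow, (ev_odd p).1, (ev_odd p).2, h2]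

lemma Brhs0 (d t : ℕ) : Brhs d t 0 = (d * t + 2 : ℤ) + 1 := by simp [Brhs]
lemma Brhs1 (d t : ℕ) : Brhs d t 1 = (2 * (t : ℤ) + 2) ^ ((d + 1) / 2 - 1) := by simp [Brhs]
lemma Brhs2 (d t r : ℕ) : Brhs d t (r + 2) = 0 := by simp [Brhs]

def aZ (d : ℕ) (z : Fin d → ℤ) (p : ℕ) : ℤ := if h : 2 * p < d then z ⟨2 * p, h⟩ else 0
def bZ (d : ℕ) (z : Fin d → ℤ) (p : ℕ) : ℤ := if h : 2 * p + 1 < d then z ⟨2 * p + 1, h⟩ else 0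

lemma rowEq (d t : ℕ) (z : Fin d → ℤ) (i : ℕ) :
    ∑ j, Arow d t i j.1 * z j
      = ∑ p ∈ range ((d + 1) / 2),
          (Arow d t i (2 * p) * aZ d z p + Arow d t i (2 * p + 1) * bZ d z p) := by
  rw [sum_fin_pairs d (fun j => Arow d t i j.1 * z j)]
  apply Finset.sum_congr rfl
  intro p _
  congr 1
  · by_cases h : 2 * p < d
    · simp [aZ, h]
    · simp [aZ, h]
  · by_cases h : 2 * p + 1 < d
    · simp [bZ, h]
    · simp [bZ, h]

lemma zEq (d : ℕ) (z : Fin d → ℤ) :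
    ∑ j, z j = ∑ p ∈ range ((d + 1) / 2), (aZ d z p + bZ d z p) :=
  sum_fin_pairs d z

/-! ### backward direction -/

lemma coeff_le (d t i j : ℕ) : Arow d t i j ≤ Brhs d t i := by
  have ht : (0:ℤ) ≤ (t:ℤ) := Int.natCast_nonneg t
  have hV1 : (1:ℤ) ≤ 2 * (t:ℤ) + 2 := by linarith
  have hW0 : (0:ℤ) ≤ (2 * (t:ℤ) + 2) ^ ((d+1)/2 - 1) := by positivity
  have hpA : (0:ℤ) ≤ (2 * (t:ℤ) + 2) ^ (i - 2 + 2) := by positivity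
  have hp3 : (0:ℤ) ≤ (2 * (t:ℤ) + 2) ^ (j/2 + 1) := by positivity
  have hL : (0:ℤ) ≤ (4 * (t:ℤ) + 4) * (2 * (t:ℤ) + 2) ^ ((d+1)/2 - 1) := by positivity
  unfold Arow Brhs
  split_ifs <;>
    first
      | linarith
      | (have hple : (2 * (t:ℤ) + 2) ^ (j/2 + 1) ≤ (2 * (t:ℤ) + 2) ^ ((d+1)/2 - 1) :=
          pow_le_pow_right₀ hV1 (by omega)
         linarith)

lemma backward (d t : ℕ) (z : Fin d → ℤ) (hΔ : z = 0 ∨ ∃ i, z = Pi.single i 1)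
    (i : Fin ((d + 1) / 2 + 2)) : ∑ j, Arow d t i.1 j.1 * z j ≤ Brhs d t i.1 := by
  have ht : (0:ℤ) ≤ (t:ℤ) := Int.natCast_nonneg t
  have hrhs0 : (0:ℤ) ≤ Brhs d t i.1 := by
    unfold Brhs
    split_ifs <;> positivity
  rcases hΔ with rfl | ⟨i0, rfl⟩
  · simpa using hrhs0
  · have hsum : ∑ j, Arow d t i.1 j.1 * (Pi.single i0 1 : Fin d → ℤ) j = Arow d t i.1 i0.1 := by
      rw [Finset.sum_eq_single i0]
      · simp
      · intro j _ hj
        simp [Pi.single_apply, hj]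
      · intro h
        exact absurd (Finset.mem_univ i0) h
    rw [hsum]
    exact coeff_le d t i.1 i0.1

lemma nonneg_sum_le_one {d : ℕ} (z : Fin d → ℤ) (h0 : ∀ j, 0 ≤ z j)
    (h1 : ∑ j, z j ≤ 1) : z = 0 ∨ ∃ i, z = Pi.single i 1 := by
  by_cases hz : ∀ j, z j = 0
  · left; funext j; exact hz j
  · right
    push_neg at hz
    obtain ⟨i, hi⟩ := hz
    have hi1 : 1 ≤ z i := lt_of_le_of_ne (h0 i) (Ne.symm hi)
    have hsplit : ∑ j ∈ univ.erase i, z j + z i = ∑ j, z j :=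
      Finset.sum_erase_add _ _ (mem_univ i)
    have hrest : 0 ≤ ∑ j ∈ univ.erase i, z j :=
      Finset.sum_nonneg fun j _ => h0 j
    have hrest0 : ∑ j ∈ univ.erase i, z j = 0 := by omega
    have hzi : z i = 1 := by omega
    refine ⟨i, funext fun j => ?_⟩
    rcases eq_or_ne j i with rfl | hne
    · simpa [Pi.single_apply] using hzi
    · have := (Finset.sum_eq_zero_iff_of_nonneg (fun j _ => h0 j)).mp hrest0 j
        (by simp [hne])
      simpa [Pi.single_apply, hne] using this

/-! ### forward direction -/

lemma forward (d t : ℕ) (hd : 0 < d) (z : Fin d → ℤ) (hz : ∀ i, |z i| ≤ (t : ℤ))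
    (H : ∀ i : Fin ((d + 1) / 2 + 2), ∑ j, Arow d t i.1 j.1 * z j ≤ Brhs d t i.1) :
    z = 0 ∨ ∃ i, z = Pi.single i 1 := by
  have ht : (0:ℤ) ≤ (t:ℤ) := Int.natCast_nonneg t
  have hm1 : 1 ≤ (d + 1) / 2 := by omega
  have ha : ∀ p, -(t:ℤ) ≤ aZ d z p ∧ aZ d z p ≤ t := by
    intro p
    unfold aZ
    split_ifs with h
    · exact abs_le.mp (hz _)
    · constructor <;> linarith
  have hb : ∀ p, -(t:ℤ) ≤ bZ d z p ∧ bZ d z p ≤ t := by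
    intro p
    unfold bZ
    split_ifs with h
    · exact abs_le.mp (hz _)
    · constructor <;> linarith
  have hrow : ∀ i, i < (d + 1) / 2 + 2 →
      ∑ p ∈ range ((d + 1) / 2),
        (Arow d t i (2 * p) * aZ d z p + Arow d t i (2 * p + 1) * bZ d z p)
      ≤ Brhs d t i := by
    intro i hi
    have h := H ⟨i, hi⟩
    rwa [rowEq] at h
  -- row 0
  have h0 := hrow 0 (by omega)
  simp only [Arow0_even, Arow0_odd, Brhs0] at h0
  have hS : ((d:ℤ) * t + 2) * (∑ p ∈ range ((d+1)/2), aZ d z p)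
      + ((d:ℤ) * t + 2) * (∑ p ∈ range ((d+1)/2), bZ d z p)
      + (∑ p ∈ range ((d+1)/2), (if p + 2 = (d+1)/2 then (-1:ℤ) else 1) * bZ d z p)
      ≤ ((d:ℤ) * t + 2) + 1 := by
    have e : ((d:ℤ) * t + 2) * (∑ p ∈ range ((d+1)/2), aZ d z p)
        + ((d:ℤ) * t + 2) * (∑ p ∈ range ((d+1)/2), bZ d z p)
        + (∑ p ∈ range ((d+1)/2), (if p + 2 = (d+1)/2 then (-1:ℤ) else 1) * bZ d z p)
        = ∑ p ∈ range ((d+1)/2),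
            (((d:ℤ) * t + 2) * aZ d z p
              + (((d:ℤ) * t + 2) + (if p + 2 = (d+1)/2 then (-1:ℤ) else 1)) * bZ d z p) := by
      rw [Finset.mul_sum, Finset.mul_sum, ← Finset.sum_add_distrib, ← Finset.sum_add_distrib]
      exact Finset.sum_congr rfl fun p _ => by ring
    rw [e]
    exact h0
  -- row 1
  have h1 := hrow 1 (by omega)
  simp only [Arow1_even, Arow1_odd, Brhs1] at h1
  have hC0 : (2*(t:ℤ)+2) ^ ((d+1)/2 - 1) * (∑ p ∈ range ((d+1)/2), aZ d z p)
      - (4*(t:ℤ)+4) * (2*(t:ℤ)+2) ^ ((d+1)/2 - 1) * (∑ p ∈ range ((d+1)/2), bZ d z p)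
      + (∑ p ∈ range ((d+1)/2),
          (if p + 2 ≤ (d+1)/2 then (2*(t:ℤ)+2) ^ (p+1) else -1) * bZ d z p)
      ≤ (2*(t:ℤ)+2) ^ ((d+1)/2 - 1) := by
    have e : (2*(t:ℤ)+2) ^ ((d+1)/2 - 1) * (∑ p ∈ range ((d+1)/2), aZ d z p)
        - (4*(t:ℤ)+4) * (2*(t:ℤ)+2) ^ ((d+1)/2 - 1) * (∑ p ∈ range ((d+1)/2), bZ d z p)
        + (∑ p ∈ range ((d+1)/2),
            (if p + 2 ≤ (d+1)/2 then (2*(t:ℤ)+2) ^ (p+1) else -1) * bZ d z p)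
        = ∑ p ∈ range ((d+1)/2),
            ((2*(t:ℤ)+2) ^ ((d+1)/2 - 1) * aZ d z p
              + (-(4*(t:ℤ)+4) * (2*(t:ℤ)+2) ^ ((d+1)/2 - 1)
                  + (if p + 2 ≤ (d+1)/2 then (2*(t:ℤ)+2) ^ (p+1) else -1)) * bZ d z p) := by
      rw [Finset.mul_sum, Finset.mul_sum, ← Finset.sum_sub_distrib, ← Finset.sum_add_distrib]
      exact Finset.sum_congr rfl fun p _ => by ring
    rw [e]
    exact h1
  -- rows r+2
  have hCr : ∀ r, r < (d+1)/2 →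
      0 ≤ (2*(t:ℤ)+2) ^ (r+2) * aZ d z r
          + ∑ q ∈ range (r+1), (2*(t:ℤ)+2) ^ (q+1) * bZ d z q := by
    intro r hr
    have h2 := hrow (r+2) (by omega)
    simp only [Arow2_even, Arow2_odd, Brhs2] at h2
    have e1 : ∑ p ∈ range ((d+1)/2),
        ((if p = r then -(2*(t:ℤ)+2) ^ (r+2) else 0) * aZ d z p
          + (if p ≤ r then -(2*(t:ℤ)+2) ^ (p+1) else 0) * bZ d z p)
        = -((2*(t:ℤ)+2) ^ (r+2) * aZ d z r)
          + -(∑ q ∈ range (r+1), (2*(t:ℤ)+2) ^ (q+1) * bZ d z q) := by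
      rw [Finset.sum_add_distrib]
      congr 1
      · simp only [ite_mul, zero_mul]
        rw [Finset.sum_ite_eq' (range ((d+1)/2)) r
          (fun p => -(2*(t:ℤ)+2) ^ (r+2) * aZ d z p)]
        rw [if_pos (mem_range.mpr hr)]
        ring
      · have hfil : (range ((d+1)/2)).filter (· ≤ r) = range (r+1) := by
          ext x
          simp only [mem_filter, mem_range]
          omega
        calc ∑ p ∈ range ((d+1)/2), (if p ≤ r then -(2*(t:ℤ)+2) ^ (p+1) else 0) * bZ d z p
            = ∑ p ∈ range ((d+1)/2),
                (if p ≤ r then -((2*(t:ℤ)+2) ^ (p+1) * bZ d z p) else 0) := by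
              refine Finset.sum_congr rfl fun p _ => ?_
              split_ifs <;> ring
          _ = ∑ p ∈ (range ((d+1)/2)).filter (· ≤ r),
                -((2*(t:ℤ)+2) ^ (p+1) * bZ d z p) := (Finset.sum_filter _ _).symm
          _ = -(∑ q ∈ range (r+1), (2*(t:ℤ)+2) ^ (q+1) * bZ d z q) := by
              rw [hfil, Finset.sum_neg_distrib]
    rw [e1] at h2
    linarith
  -- apply the core lemma
  have hMle : ((d+1)/2 : ℤ) * t + 2 ≤ (d:ℤ) * t + 2 := by
    have h1 : ((d+1)/2 : ℕ) ≤ d := by omega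
    have h2 : (((d+1)/2 : ℕ) : ℤ) ≤ (d:ℤ) := by exact_mod_cast h1
    nlinarith
  obtain ⟨hnn, hsum1⟩ := core ((d+1)/2) hm1 (t:ℤ) ht (aZ d z) (bZ d z) ha hb
    ((d:ℤ) * t + 2) hMle hS hC0 hCr
  -- reconstruct
  have hz0 : ∀ j : Fin d, 0 ≤ z j := by
    intro j
    by_cases hpar : j.1 % 2 = 0
    · have hlt : 2 * (j.1 / 2) < d := by have := j.2; omega
      have hpm : j.1 / 2 < (d+1)/2 := by have := j.2; omega
      have h := (hnn (j.1/2) hpm).1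
      unfold aZ at h
      rw [dif_pos hlt] at h
      have hje : (⟨2 * (j.1/2), hlt⟩ : Fin d) = j := by
        apply Fin.ext
        show 2 * (j.1/2) = j.1
        omega
      rwa [hje] at h
    · have hlt : 2 * (j.1 / 2) + 1 < d := by have := j.2; omega
      have hpm : j.1 / 2 < (d+1)/2 := by have := j.2; omega
      have h := (hnn (j.1/2) hpm).2
      unfold bZ at h
      rw [dif_pos hlt] at h
      have hje : (⟨2 * (j.1/2) + 1, hlt⟩ : Fin d) = j := by
        apply Fin.ext
        show 2 * (j.1/2) + 1 = j.1
        omega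
      rwa [hje] at h
  have hsz : ∑ j, z j ≤ 1 := by
    rw [zEq d z, Finset.sum_add_distrib]
    exact hsum1
  exact nonneg_sum_le_one z hz0 hsz

end RCFlatAux

end RCFlatAuxSection

/-- `rc(Δ_d, B_t) ≤ ⌈d/2⌉ + 2` for every `t`; hence
`rc_flat(Δ_d) ≤ ⌈d/2⌉ + 2`, so for `d ≥ 4` no finite set certifies that every
relaxation of `Δ_d` needs `d + 1` inequalities. -/
theorem rc_flat_simplex_upper (d : ℕ) (hd : 0 < d) (t : ℕ) :
    ∃ (A : Fin ((d + 1) / 2 + 2) → Fin d → ℝ) (b : Fin ((d + 1) / 2 + 2) → ℝ),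
      ∀ z : Fin d → ℤ, (∀ i, |z i| ≤ (t : ℤ)) →
        ((∀ i, ∑ j, A i j * (z j : ℝ) ≤ b i) ↔
          (z = 0 ∨ ∃ i, z = Pi.single i 1)) := by
  refine ⟨fun i j => ((RCFlatAux.Arow d t i.1 j.1 : ℤ) : ℝ),
    fun i => ((RCFlatAux.Brhs d t i.1 : ℤ) : ℝ), ?_⟩
  intro z hz
  have hcast : ∀ i : Fin ((d + 1) / 2 + 2),
      ((∑ j, ((RCFlatAux.Arow d t i.1 j.1 : ℤ) : ℝ) * (z j : ℝ)
          ≤ ((RCFlatAux.Brhs d t i.1 : ℤ) : ℝ))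
        ↔ (∑ j, RCFlatAux.Arow d t i.1 j.1 * z j ≤ RCFlatAux.Brhs d t i.1)) := by
    intro i
    have e : ((∑ j, RCFlatAux.Arow d t i.1 j.1 * z j : ℤ) : ℝ)
        = ∑ j, ((RCFlatAux.Arow d t i.1 j.1 : ℤ) : ℝ) * (z j : ℝ) := by
      push_cast
      rfl
    rw [← e, Int.cast_le]
  constructor
  · intro H
    exact RCFlatAux.forward d t hd z hz fun i => (hcast i).mp (H i)
  · intro hΔ i
    exact (hcast i).mpr (RCFlatAux.backward d t z hΔ i)
end

section
/- For every d ≥ 4, rc_flat(Δ_d) ≥ log₂ log₂ d, i.e., there exists t such that any system of m linear inequalities separating Δ_d from ([−t,t]^d ∩ ℤ^d) \ Δ_d must have m ≥ log₂ log₂ d. -/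
open Finset

section Aux

attribute [local instance] Classical.propDecidable

variable {d : ℕ}

/-- Length of the longest weakly monotone subset of `S` ending at `x`. -/
private noncomputable def incLen (f : Fin d → ℝ) (S : Finset (Fin d)) (x : Fin d) : ℕ :=
  (S.powerset.filter (fun T : Finset (Fin d) => x ∈ T ∧ (∀ a ∈ T, a ≤ x) ∧ MonotoneOn f (T : Set (Fin d)))).sup
    Finset.card

private noncomputable def decLen (f : Fin d → ℝ) (S : Finset (Fin d)) (x : Fin d) : ℕ :=
  (S.powerset.filter (fun T : Finset (Fin d) => x ∈ T ∧ (∀ a ∈ T, a ≤ x) ∧ AntitoneOn f (T : Set (Fin d)))).sup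
    Finset.card

private lemma incLen_pos (f : Fin d → ℝ) {S : Finset (Fin d)} {x : Fin d}
    (hx : x ∈ S) : 1 ≤ incLen f S x := by
  have h : ({x} : Finset (Fin d)) ∈ S.powerset.filter
      (fun T : Finset (Fin d) => x ∈ T ∧ (∀ a ∈ T, a ≤ x) ∧ MonotoneOn f (T : Set (Fin d))) := by
    simp only [mem_filter, mem_powerset]
    refine ⟨by simpa using hx, by simp, by simp, ?_⟩
    intro a ha b hb _
    simp only [coe_singleton, Set.mem_singleton_iff] at ha hb
    subst ha; subst hb; exact le_rfl
  have := Finset.le_sup (f := Finset.card) h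
  rwa [Finset.card_singleton] at this

private lemma decLen_pos (f : Fin d → ℝ) {S : Finset (Fin d)} {x : Fin d}
    (hx : x ∈ S) : 1 ≤ decLen f S x := by
  have h : ({x} : Finset (Fin d)) ∈ S.powerset.filter
      (fun T : Finset (Fin d) => x ∈ T ∧ (∀ a ∈ T, a ≤ x) ∧ AntitoneOn f (T : Set (Fin d))) := by
    simp only [mem_filter, mem_powerset]
    refine ⟨by simpa using hx, by simp, by simp, ?_⟩
    intro a ha b hb _
    simp only [coe_singleton, Set.mem_singleton_iff] at ha hb
    subst ha; subst hb; exact le_rfl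
  have := Finset.le_sup (f := Finset.card) h
  rwa [Finset.card_singleton] at this

private lemma incLen_lt (f : Fin d → ℝ) {S : Finset (Fin d)} {x y : Fin d}
    (hx : x ∈ S) (hy : y ∈ S) (hxy : x < y) (hf : f x ≤ f y) :
    incLen f S x < incLen f S y := by
  classical
  have hne : (S.powerset.filter (fun T : Finset (Fin d) => x ∈ T ∧ (∀ a ∈ T, a ≤ x) ∧ MonotoneOn f (T : Set (Fin d)))).Nonempty := by
    refine ⟨{x}, ?_⟩
    simp only [mem_filter, mem_powerset]
    refine ⟨by simpa using hx, by simp, by simp, ?_⟩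
    intro a ha b hb _
    simp only [coe_singleton, Set.mem_singleton_iff] at ha hb
    subst ha; subst hb; exact le_rfl
  obtain ⟨T, hTmem, hTeq⟩ := Finset.exists_mem_eq_sup _ hne Finset.card
  simp only [mem_filter, mem_powerset] at hTmem
  obtain ⟨hTS, hxT, hTle, hTmono⟩ := hTmem
  have hyT : y ∉ T := fun h => absurd (hTle y h) (not_le.mpr hxy)
  have hmono' : MonotoneOn f ↑(insert y T) := by
    intro a ha b hb hab
    simp only [coe_insert, Set.mem_insert_iff, mem_coe] at ha hb
    rcases ha with rfl | ha
    · rcases hb with rfl | hb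
      · exact le_rfl
      · exact absurd (le_trans hab (hTle b hb)) (not_le.mpr hxy)
    · rcases hb with rfl | hb
      · exact le_trans (hTmono (mem_coe.mpr ha) (mem_coe.mpr hxT) (hTle a ha)) hf
      · exact hTmono (mem_coe.mpr ha) (mem_coe.mpr hb) hab
  have hmem : insert y T ∈ S.powerset.filter
      (fun T : Finset (Fin d) => y ∈ T ∧ (∀ a ∈ T, a ≤ y) ∧ MonotoneOn f (T : Set (Fin d))) := by
    simp only [mem_filter, mem_powerset]
    refine ⟨?_, by simp, ?_, hmono'⟩
    · exact insert_subset hy hTS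
    · intro a ha
      rcases mem_insert.mp ha with rfl | ha
      · exact le_rfl
      · exact le_trans (hTle a ha) hxy.le
  have := Finset.le_sup (f := Finset.card) hmem
  rw [card_insert_of_notMem hyT] at this
  calc incLen f S x = T.card := hTeq
    _ < T.card + 1 := Nat.lt_succ_self _
    _ ≤ incLen f S y := this

private lemma decLen_lt (f : Fin d → ℝ) {S : Finset (Fin d)} {x y : Fin d}
    (hx : x ∈ S) (hy : y ∈ S) (hxy : x < y) (hf : f y ≤ f x) :
    decLen f S x < decLen f S y := by
  classical
  have hne : (S.powerset.filter (fun T : Finset (Fin d) => x ∈ T ∧ (∀ a ∈ T, a ≤ x) ∧ AntitoneOn f (T : Set (Fin d)))).Nonempty := by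
    refine ⟨{x}, ?_⟩
    simp only [mem_filter, mem_powerset]
    refine ⟨by simpa using hx, by simp, by simp, ?_⟩
    intro a ha b hb _
    simp only [coe_singleton, Set.mem_singleton_iff] at ha hb
    subst ha; subst hb; exact le_rfl
  obtain ⟨T, hTmem, hTeq⟩ := Finset.exists_mem_eq_sup _ hne Finset.card
  simp only [mem_filter, mem_powerset] at hTmem
  obtain ⟨hTS, hxT, hTle, hTanti⟩ := hTmem
  have hyT : y ∉ T := fun h => absurd (hTle y h) (not_le.mpr hxy)
  have hanti' : AntitoneOn f ↑(insert y T) := by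
    intro a ha b hb hab
    simp only [coe_insert, Set.mem_insert_iff, mem_coe] at ha hb
    rcases ha with rfl | ha
    · rcases hb with rfl | hb
      · exact le_rfl
      · exact absurd (le_trans hab (hTle b hb)) (not_le.mpr hxy)
    · rcases hb with rfl | hb
      · exact le_trans hf (hTanti (mem_coe.mpr ha) (mem_coe.mpr hxT) (hTle a ha))
      · exact hTanti (mem_coe.mpr ha) (mem_coe.mpr hb) hab
  have hmem : insert y T ∈ S.powerset.filter
      (fun T : Finset (Fin d) => y ∈ T ∧ (∀ a ∈ T, a ≤ y) ∧ AntitoneOn f (T : Set (Fin d))) := by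
    simp only [mem_filter, mem_powerset]
    refine ⟨?_, by simp, ?_, hanti'⟩
    · exact insert_subset hy hTS
    · intro a ha
      rcases mem_insert.mp ha with rfl | ha
      · exact le_rfl
      · exact le_trans (hTle a ha) hxy.le
  have := Finset.le_sup (f := Finset.card) hmem
  rw [card_insert_of_notMem hyT] at this
  calc decLen f S x = T.card := hTeq
    _ < T.card + 1 := Nat.lt_succ_self _
    _ ≤ decLen f S y := this

/-- Weak Erdős–Szekeres: a set of more than `n * n` columns contains a subset of
more than `n` columns on which `f` is weakly monotone or weakly antitone. -/
private lemma es_weak (f : Fin d → ℝ) (S : Finset (Fin d)) (n : ℕ)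
    (h : n * n < S.card) :
    ∃ T ⊆ S, n < T.card ∧ (MonotoneOn f ↑T ∨ AntitoneOn f ↑T) := by
  classical
  by_contra hcon
  push_neg at hcon
  -- every witness set has card ≤ n, so incLen, decLen ≤ n on S
  have hinc : ∀ x ∈ S, incLen f S x ≤ n := by
    intro x hx
    apply Finset.sup_le
    intro T hT
    simp only [mem_filter, mem_powerset] at hT
    by_contra hbig
    exact absurd (hcon T hT.1 (not_le.mp hbig)).1 (not_not.mpr hT.2.2.2)
  have hdec : ∀ x ∈ S, decLen f S x ≤ n := by
    intro x hx
    apply Finset.sup_le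
    intro T hT
    simp only [mem_filter, mem_powerset] at hT
    by_contra hbig
    exact absurd (hcon T hT.1 (not_le.mp hbig)).2 (not_not.mpr hT.2.2.2)
  -- the map x ↦ (incLen x, decLen x) is injective on S
  have hinj : Set.InjOn (fun x => (incLen f S x, decLen f S x)) ↑S := by
    intro x hx y hy hxy
    by_contra hne
    rcases lt_or_gt_of_ne hne with hlt | hlt
    · rcases le_or_gt (f x) (f y) with hf | hf
      · exact absurd (congrArg Prod.fst hxy)
          (Nat.ne_of_lt (incLen_lt f (mem_coe.mp hx) (mem_coe.mp hy) hlt hf))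
      · exact absurd (congrArg Prod.snd hxy)
          (Nat.ne_of_lt (decLen_lt f (mem_coe.mp hx) (mem_coe.mp hy) hlt hf.le))
    · rcases le_or_gt (f y) (f x) with hf | hf
      · exact absurd (congrArg Prod.fst hxy).symm
          (Nat.ne_of_lt (incLen_lt f (mem_coe.mp hy) (mem_coe.mp hx) hlt hf))
      · exact absurd (congrArg Prod.snd hxy).symm
          (Nat.ne_of_lt (decLen_lt f (mem_coe.mp hy) (mem_coe.mp hx) hlt hf.le))
  have hmaps : ∀ x ∈ S, (incLen f S x, decLen f S x) ∈
      (Finset.Icc 1 n) ×ˢ (Finset.Icc 1 n) := by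
    intro x hx
    simp only [mem_product, Finset.mem_Icc]
    exact ⟨⟨incLen_pos f hx, hinc x hx⟩, ⟨decLen_pos f hx, hdec x hx⟩⟩
  have hcard := Finset.card_le_card_of_injOn _ hmaps hinj
  rw [Finset.card_product, Nat.card_Icc] at hcard
  simp only [Nat.add_sub_cancel] at hcard
  omega

/-- De Bruijn's lemma via iterated Erdős–Szekeres. -/
private lemma triple_lemma : ∀ (m : ℕ) (A : Fin m → Fin d → ℝ) (S : Finset (Fin d)),
    2 ^ (2 ^ m) < S.card →
    ∃ j ∈ S, ∃ k ∈ S, ∃ l ∈ S, j < k ∧ k < l ∧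
      ∀ i, A i k ≤ A i j ∨ A i k ≤ A i l := by
  intro m
  induction m with
  | zero =>
    intro A S hS
    -- S.card ≥ 3
    norm_num at hS
    have hne : S.Nonempty := Finset.card_pos.mp (by omega)
    set j := S.min' hne with hj
    set l := S.max' hne with hl
    have hjS : j ∈ S := S.min'_mem hne
    have hlS : l ∈ S := S.max'_mem hne
    have hmid : (S \ {j, l}).Nonempty := by
      rw [← Finset.card_pos]
      have h2 : ({j, l} : Finset (Fin d)).card ≤ 2 :=
        (Finset.card_insert_le _ _).trans (by simp)
      have h3 := Finset.le_card_sdiff ({j, l} : Finset (Fin d)) S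
      omega
    obtain ⟨k, hk⟩ := hmid
    rw [Finset.mem_sdiff] at hk
    obtain ⟨hkS, hknot⟩ := hk
    simp only [Finset.mem_insert, Finset.mem_singleton, not_or] at hknot
    refine ⟨j, hjS, k, hkS, l, hlS, ?_, ?_, fun i => i.elim0⟩
    · exact lt_of_le_of_ne (S.min'_le k hkS) (Ne.symm hknot.1)
    · exact lt_of_le_of_ne (S.le_max' k hkS) hknot.2
  | succ m ih =>
    intro A S hS
    obtain ⟨T, hTS, hTcard, hTmono⟩ := es_weak (A 0) S (2 ^ (2 ^ m)) (by
      have he : 2 ^ (m + 1) = 2 ^ m + 2 ^ m := by rw [pow_succ, mul_two]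
      rw [← pow_add, ← he]
      exact hS)
    obtain ⟨j, hjT, k, hkT, l, hlT, hjk, hkl, hrows⟩ :=
      ih (fun i => A i.succ) T hTcard
    refine ⟨j, hTS hjT, k, hTS hkT, l, hTS hlT, hjk, hkl, ?_⟩
    intro i
    refine Fin.cases ?_ (fun i' => hrows i') i
    rcases hTmono with hmono | hanti
    · exact Or.inr (hmono (mem_coe.mpr hkT) (mem_coe.mpr hlT) hkl.le)
    · exact Or.inl (hanti (mem_coe.mpr hjT) (mem_coe.mpr hkT) hjk.le)

private lemma sum_single_mul (u : Fin d → ℝ) (j : Fin d) :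
    ∑ j', u j' * (((Pi.single j 1 : Fin d → ℤ) j' : ℤ) : ℝ) = u j := by
  rw [Finset.sum_eq_single j]
  · simp
  · intro b _ hb
    simp [Pi.single_apply, hb]
  · simp

private lemma sum_affine {m' : ℕ} (u : Fin d → ℝ) (c : Fin d → ℝ) (w : ℝ)
    (h : m' = d) :
    ∑ j', (u j' * c j' + w) = (∑ j', u j' * c j') + (d : ℝ) * w := by
  rw [Finset.sum_add_distrib, Finset.sum_const, Finset.card_univ,
    Fintype.card_fin, nsmul_eq_mul]

end Aux

/-- `rc_flat(Δ_d) ≥ log₂ log₂ d` for `d ≥ 4`: there is `t` such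
that every system of `m` affine inequalities whose nonnegativity region within
`[−t,t]^d ∩ ℤ^d` is exactly `Δ_d` satisfies `m ≥ log₂ log₂ d`. -/
theorem rc_flat_simplex_lower (d : ℕ) (hd : 4 ≤ d) :
    ∃ t : ℕ, ∀ (m : ℕ) (U : Fin m → Fin d → ℝ) (v : Fin m → ℝ),
      (∀ z : Fin d → ℤ, (∀ i, |z i| ≤ (t : ℤ)) →
        ((∀ i, 0 ≤ ∑ j, U i j * (z j : ℝ) + v i) ↔
          (z = 0 ∨ ∃ i, z = Pi.single i 1))) →
      Real.logb 2 (Real.logb 2 d) ≤ (m : ℝ) := by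
  classical
  refine ⟨1, ?_⟩
  intro m U v hU
  have hd0 : (0 : ℝ) < d := by positivity
  -- the shifted matrix A i j = U i j + d * v i
  set A : Fin m → Fin d → ℝ := fun i j => U i j + v i with hA
  have hv : ∀ i, 0 ≤ v i := by
    have h0 := (hU 0 (by simp)).mpr (Or.inl rfl)
    intro i
    simpa using h0 i
  have hAnn : ∀ i j, 0 ≤ A i j := by
    intro i j
    have hbound : ∀ i', |(Pi.single j 1 : Fin d → ℤ) i'| ≤ ((1 : ℕ) : ℤ) := by
      intro i'
      rw [Pi.single_apply]
      split_ifs <;> simp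
    have h := (hU (Pi.single j 1) hbound).mpr (Or.inr ⟨j, rfl⟩) i
    rw [sum_single_mul] at h
    exact h
  -- main combinatorial bound: d ≤ 2 ^ (2 ^ m)
  have hkey : d ≤ 2 ^ (2 ^ m) := by
    by_contra hcon
    push_neg at hcon
    obtain ⟨j, -, k, -, l, -, hjk, hkl, hrows⟩ :=
      triple_lemma m A (Finset.univ : Finset (Fin d)) (by simpa using hcon)
    have hjk' : j ≠ k := ne_of_lt hjk
    have hkl' : k ≠ l := ne_of_lt hkl
    have hjl' : j ≠ l := ne_of_lt (hjk.trans hkl)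
    set z : Fin d → ℤ :=
      (Pi.single j 1 : Fin d → ℤ) - Pi.single k 1 + Pi.single l 1 with hz
    have hzval : ∀ j', z j' = (Pi.single j 1 : Fin d → ℤ) j'
        - (Pi.single k 1 : Fin d → ℤ) j' + (Pi.single l 1 : Fin d → ℤ) j' := by
      intro j'; rfl
    have hzk : z k = -1 := by
      rw [hzval k]
      simp [Pi.single_apply, hjk'.symm, hkl']
    have hbound : ∀ i', |z i'| ≤ ((1 : ℕ) : ℤ) := by
      intro i'
      rw [hzval i']
      simp only [Pi.single_apply]
      rcases eq_or_ne i' j with rfl | h1 <;>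
        rcases eq_or_ne i' k with rfl | h2 <;>
          rcases eq_or_ne i' l with rfl | h3 <;>
            simp_all
    have hnot : ¬ (z = 0 ∨ ∃ i, z = Pi.single i 1) := by
      rintro (h | ⟨i, h⟩)
      · have := congrFun h k
        rw [hzk] at this
        exact absurd this (by norm_num)
      · have := congrFun h k
        rw [hzk] at this
        rw [Pi.single_apply] at this
        split_ifs at this <;> omega
    have hneg := (hU z hbound).not.mpr hnot
    push_neg at hneg
    obtain ⟨i, hi⟩ := hneg
    have hsum : ∑ j', U i j' * ((z j' : ℤ) : ℝ)
        = U i j - U i k + U i l := by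
      have hsplit : ∀ j', U i j' * ((z j' : ℤ) : ℝ)
          = U i j' * (((Pi.single j 1 : Fin d → ℤ) j' : ℤ) : ℝ)
            - U i j' * (((Pi.single k 1 : Fin d → ℤ) j' : ℤ) : ℝ)
            + U i j' * (((Pi.single l 1 : Fin d → ℤ) j' : ℤ) : ℝ) := by
        intro j'
        rw [hzval j']
        push_cast
        ring
      calc ∑ j', U i j' * ((z j' : ℤ) : ℝ)
          = ∑ j', (U i j' * (((Pi.single j 1 : Fin d → ℤ) j' : ℤ) : ℝ)
            - U i j' * (((Pi.single k 1 : Fin d → ℤ) j' : ℤ) : ℝ)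
            + U i j' * (((Pi.single l 1 : Fin d → ℤ) j' : ℤ) : ℝ)) :=
            Finset.sum_congr rfl (fun j' _ => hsplit j')
        _ = U i j - U i k + U i l := by
            rw [Finset.sum_add_distrib, Finset.sum_sub_distrib,
              sum_single_mul, sum_single_mul, sum_single_mul]
    rw [hsum] at hi
    -- A i j + A i l < A i k
    have hlt : A i j + A i l < A i k := by
      simp only [hA]
      have := hv i
      linarith
    rcases hrows i with h | h
    · have := hAnn i l; linarith
    · have := hAnn i j; linarith
  -- convert to the logarithmic bound
  have hd2 : (2 : ℝ) ≤ Real.logb 2 d := by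
    calc (2 : ℝ) = Real.logb 2 ((2 : ℝ) ^ (2 : ℕ)) := by
          rw [Real.logb_pow, Real.logb_self_eq_one (by norm_num : (1:ℝ) < 2)]
          norm_num
      _ ≤ Real.logb 2 d := by
          apply Real.logb_le_logb_of_le (by norm_num : (1:ℝ) < 2) (by norm_num)
          norm_num
          exact_mod_cast hd
  have h1 : Real.logb 2 d ≤ (2 : ℝ) ^ (m : ℕ) := by
    calc Real.logb 2 d ≤ Real.logb 2 ((2 : ℝ) ^ (2 ^ m : ℕ)) := by
          apply Real.logb_le_logb_of_le (by norm_num : (1:ℝ) < 2) hd0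
          calc (d : ℝ) ≤ ((2 ^ (2 ^ m) : ℕ) : ℝ) := by exact_mod_cast hkey
            _ = (2 : ℝ) ^ (2 ^ m : ℕ) := by push_cast; ring
      _ = ((2 ^ m : ℕ) : ℝ) * 1 := by
          rw [Real.logb_pow, Real.logb_self_eq_one (by norm_num : (1:ℝ) < 2)]
      _ = (2 : ℝ) ^ (m : ℕ) := by push_cast; ring
  calc Real.logb 2 (Real.logb 2 d)
      ≤ Real.logb 2 ((2 : ℝ) ^ (m : ℕ)) :=
        Real.logb_le_logb_of_le (by norm_num : (1:ℝ) < 2) (by linarith) h1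
    _ = ((m : ℕ) : ℝ) * 1 := by
        rw [Real.logb_pow, Real.logb_self_eq_one (by norm_num : (1:ℝ) < 2)]
    _ = (m : ℝ) := by ring
end
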